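/- arXiv:2604.00588 — 9 statements merged into one kernel-verified Lean document; each statement's English description precedes it below -/
import Mathlib

section
/- Let Z have density f_Z(z) = 1/(D*sqrt(z - d^2)) on [d^2, d^2 + D^2/4]. Then for any ρ > 0, E[(1/M) * log2(1 + η*ρ/Z)] = (1/M)*(Λ1 + Λ2), where Λ1 = log2(1 + η*ρ/(d^2 + D^2/4)) and Λ2 = (4/(D*ln 2)) * [ sqrt(d^2 + η*ρ) * arctan(D/(2*sqrt(d^2 + η*ρ))) - d * arctan(D/(2d)) ]. -/
open MeasureTheory
lemma alg_aux (B dd L D s : ℝ) (hs : 0 < s) (hB : 0 < B) (hdd : 0 < dd)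
    (hL : L ≠ 0) (hD : D ≠ 0) (ha : 0 < B^2 - dd^2) :
    Real.log (1 + (B^2 - dd^2)/(s^2 + dd^2)) / L * (1/(D*s)) =
      (2/(D*L)) * ((1/(2*s)) * Real.log (1 + (B^2 - dd^2)/(s^2 + dd^2))
        + s * (-(B^2 - dd^2)/(s^2 + dd^2)^2 / (1 + (B^2 - dd^2)/(s^2 + dd^2)))
        + (2*B) * ((1/(1 + (s/B)^2)) * (1/(2*s)/B))
        - (2*dd) * ((1/(1 + (s/dd)^2)) * (1/(2*s)/dd))) := by
  have hz : (0:ℝ) < s^2 + dd^2 := by positivity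
  have h1 : (0:ℝ) < 1 + (B^2 - dd^2)/(s^2 + dd^2) := by positivity
  have h2 : (0:ℝ) < 1 + (s/B)^2 := by positivity
  have h3 : (0:ℝ) < 1 + (s/dd)^2 := by positivity
  field_simp
  ring

lemma integ_aux (D d c : ℝ) (hD : 0 < D) (hd : 0 < d) (hc : 0 < c) :
    IntervalIntegrable
      (fun z => Real.logb 2 (1 + c / z) * (1/(D * Real.sqrt (z - d^2))))
      volume (d^2) (d^2 + D^2/4) := by
  have hle : d^2 ≤ d^2 + D^2/4 := by nlinarith
  rw [intervalIntegrable_iff_integrableOn_Ioc_of_le hle]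
  have h1 : IntervalIntegrable (fun x : ℝ => x ^ (-(1/2) : ℝ)) volume 0 (D^2/4) :=
    intervalIntegral.intervalIntegrable_rpow' (by norm_num)
  have h2 := h1.comp_sub_right (d^2)
  rw [show (0:ℝ) + d^2 = d^2 by ring, show D^2/4 + d^2 = d^2 + D^2/4 by ring,
    intervalIntegrable_iff_integrableOn_Ioc_of_le hle] at h2
  have hdom : IntegrableOn
      (fun z => Real.logb 2 (1 + c/d^2) * ((1/D) * (z - d^2) ^ (-(1/2) : ℝ)))
      (Set.Ioc (d^2) (d^2 + D^2/4)) := (h2.const_mul (1/D)).const_mul _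
  apply hdom.mono'
  · apply Measurable.aestronglyMeasurable
    have m1 : Measurable (fun z : ℝ => Real.logb 2 (1 + c / z)) := by
      simp only [Real.logb]
      exact (Real.measurable_log.comp (measurable_const.add
        (measurable_const.div measurable_id))).div measurable_const
    have m2 : Measurable (fun z : ℝ => 1 / (D * Real.sqrt (z - d^2))) :=
      Measurable.const_div (measurable_const.mul
        (Real.continuous_sqrt.measurable.comp (measurable_id.sub measurable_const))) 1
    exact m1.mul m2
  · filter_upwards [ae_restrict_mem measurableSet_Ioc] with z hz
    have hz1 : d^2 < z := hz.1
    have hz0 : 0 < z := lt_trans (by positivity) hz1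
    have hsub : 0 < z - d^2 := sub_pos.mpr hz1
    have hrw : 1 / (D * Real.sqrt (z - d^2)) = (1/D) * (z - d^2) ^ (-(1/2) : ℝ) := by
      rw [Real.rpow_neg hsub.le, ← Real.sqrt_eq_rpow, one_div, mul_inv, one_div]
    rw [hrw, Real.norm_eq_abs, abs_of_nonneg]
    · have hlogle : Real.logb 2 (1 + c / z) ≤ Real.logb 2 (1 + c / d^2) := by
        apply Real.logb_le_logb_of_le (by norm_num) (by positivity)
        have : c / z ≤ c / d^2 := by
          apply div_le_div_of_nonneg_left hc.le (by positivity) hz1.le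
        linarith
      have hnn : 0 ≤ (1/D) * (z - d^2) ^ (-(1/2) : ℝ) := by positivity
      calc Real.logb 2 (1 + c / z) * ((1/D) * (z - d^2) ^ (-(1/2) : ℝ))
          ≤ Real.logb 2 (1 + c / d^2) * ((1/D) * (z - d^2) ^ (-(1/2) : ℝ)) :=
            mul_le_mul_of_nonneg_right hlogle hnn
      _ = _ := rfl
    · have : 0 ≤ Real.logb 2 (1 + c / z) :=
        Real.logb_nonneg (by norm_num) (by nlinarith [div_pos hc hz0])
      positivity

/-- Downlink OMA ergodic rate in closed form. -/
theorem stmt_4 (D d η ρ : ℝ) (hD : 0 < D) (hd : 0 < d) (hη : 0 < η)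
    (hρ : 0 < ρ) (M : ℕ) (hM : 1 ≤ M) :
    ∫ z in Set.Icc (d^2) (d^2 + D^2/4),
        (1 / (M:ℝ)) * Real.logb 2 (1 + η * ρ / z) * (1 / (D * Real.sqrt (z - d^2)))
      = (1 / (M:ℝ)) *
        (Real.logb 2 (1 + η * ρ / (d^2 + D^2/4))
          + (4 / (D * Real.log 2)) *
            (Real.sqrt (d^2 + η * ρ) * Real.arctan (D / (2 * Real.sqrt (d^2 + η * ρ)))
              - d * Real.arctan (D / (2 * d)))) := by
  have hc : 0 < η * ρ := mul_pos hη hρ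
  have hle : d^2 ≤ d^2 + D^2/4 := by nlinarith
  have hL : Real.log 2 ≠ 0 := (Real.log_pos (by norm_num)).ne'
  set b := Real.sqrt (d^2 + η * ρ) with hbdef
  have hb0 : 0 < b := Real.sqrt_pos.mpr (by positivity)
  have hb2 : b^2 = d^2 + η * ρ := Real.sq_sqrt (by positivity)
  set F : ℝ → ℝ := fun z => (2/(D * Real.log 2)) *
    (Real.sqrt (z - d^2) * Real.log (1 + η * ρ / z)
      + (2*b) * Real.arctan (Real.sqrt (z - d^2) / b)
      - (2*d) * Real.arctan (Real.sqrt (z - d^2) / d)) with hFdef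
  have key : ∫ z in (d^2)..(d^2 + D^2/4),
      Real.logb 2 (1 + η * ρ / z) * (1 / (D * Real.sqrt (z - d^2)))
      = F (d^2 + D^2/4) - F (d^2) := by
    apply intervalIntegral.integral_eq_sub_of_hasDerivAt_of_le hle
    · -- continuity
      refine continuousOn_of_forall_continuousAt fun z hz => ?_
      have hz0 : 0 < z := lt_of_lt_of_le (by positivity) hz.1
      have c1 : ContinuousAt (fun z : ℝ => Real.sqrt (z - d^2)) z :=
        (Real.continuous_sqrt.comp (continuous_id.sub continuous_const)).continuousAt
      have c2 : ContinuousAt (fun z : ℝ => Real.log (1 + η * ρ / z)) z := by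
        apply ContinuousAt.log
        · exact continuousAt_const.add (continuousAt_const.div continuousAt_id hz0.ne')
        · positivity
      exact continuousAt_const.mul (((c1.mul c2).add
        (continuousAt_const.mul ((Real.continuous_arctan.continuousAt).comp (c1.div_const b)))).sub
        (continuousAt_const.mul ((Real.continuous_arctan.continuousAt).comp (c1.div_const d))))
    · -- derivative
      intro z hz
      have hz1 : d^2 < z := hz.1
      have hz0 : 0 < z := lt_trans (by positivity) hz1
      have hsub : 0 < z - d^2 := sub_pos.mpr hz1
      have hs0 : 0 < Real.sqrt (z - d^2) := Real.sqrt_pos.mpr hsub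
      have hs2 : (Real.sqrt (z - d^2))^2 = z - d^2 := Real.sq_sqrt hsub.le
      have Hs : HasDerivAt (fun z : ℝ => Real.sqrt (z - d^2))
          (1 / (2 * Real.sqrt (z - d^2))) z := by
        have := (Real.hasDerivAt_sqrt hsub.ne').comp z
          ((hasDerivAt_id z).sub_const (d^2))
        simpa [Function.comp_def] using this
      have Hq : HasDerivAt (fun z : ℝ => 1 + η * ρ / z) (-(η*ρ)/z^2) z := by
        have := ((hasDerivAt_const z (η*ρ)).div (hasDerivAt_id z) hz0.ne').const_add 1
        simpa using this.congr_deriv (by simp only [id]; ring)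
      have Hlog : HasDerivAt (fun z : ℝ => Real.log (1 + η * ρ / z))
          (-(η*ρ)/z^2 / (1 + η * ρ / z)) z := Hq.log (by positivity)
      have Hat1 : HasDerivAt (fun z : ℝ => Real.arctan (Real.sqrt (z - d^2) / b))
          ((1/(1 + (Real.sqrt (z - d^2)/b)^2)) * (1 / (2 * Real.sqrt (z - d^2)) / b)) z := by
        have := (Real.hasDerivAt_arctan (Real.sqrt (z - d^2) / b)).comp z (Hs.div_const b)
        simpa [Function.comp_def] using this
      have Hat2 : HasDerivAt (fun z : ℝ => Real.arctan (Real.sqrt (z - d^2) / d))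
          ((1/(1 + (Real.sqrt (z - d^2)/d)^2)) * (1 / (2 * Real.sqrt (z - d^2)) / d)) z := by
        have := (Real.hasDerivAt_arctan (Real.sqrt (z - d^2) / d)).comp z (Hs.div_const d)
        simpa [Function.comp_def] using this
      have HF : HasDerivAt F ((2/(D * Real.log 2)) *
          ((1 / (2 * Real.sqrt (z - d^2))) * Real.log (1 + η * ρ / z)
            + Real.sqrt (z - d^2) * (-(η*ρ)/z^2 / (1 + η * ρ / z))
            + (2*b) * ((1/(1 + (Real.sqrt (z - d^2)/b)^2)) * (1 / (2 * Real.sqrt (z - d^2)) / b))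
            - (2*d) * ((1/(1 + (Real.sqrt (z - d^2)/d)^2)) * (1 / (2 * Real.sqrt (z - d^2)) / d)))) z := by
        exact (((Hs.mul Hlog).add (Hat1.const_mul (2*b))).sub (Hat2.const_mul (2*d))).const_mul _
      refine HF.congr_deriv ?_
      symm
      simp only [Real.logb]
      set s := Real.sqrt (z - d^2)
      have hzz : z = s^2 + d^2 := by rw [hs2]; ring
      have haa : η * ρ = b^2 - d^2 := by rw [hb2]; ring
      rw [hzz, haa]
      exact alg_aux b d (Real.log 2) D s hs0 hb0 hd hL hD.ne' (by rw [← haa]; exact hc)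
    · -- integrability
      exact integ_aux D d (η * ρ) hD hd hc
  rw [MeasureTheory.integral_Icc_eq_integral_Ioc, ← intervalIntegral.integral_of_le hle]
  simp only [mul_assoc]
  rw [intervalIntegral.integral_const_mul]
  rw [key]
  have e1 : Real.sqrt (d^2 + D^2/4 - d^2) = D/2 := by
    rw [show d^2 + D^2/4 - d^2 = (D/2)^2 by ring, Real.sqrt_sq (by positivity)]
  have e0 : Real.sqrt (d^2 - d^2) = 0 := by simp
  rw [hFdef]
  simp only [e1, e0, zero_mul, zero_div, Real.arctan_zero, mul_zero, sub_zero, add_zero,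
    sub_self]
  rw [Real.logb]
  have hhi : (0:ℝ) < 1 + η * ρ / (d^2 + D^2/4) := by positivity
  rw [show (D/2)/b = D/(2*b) by rw [div_div], show (D/2)/d = D/(2*d) by rw [div_div]]
  field_simp
  simp only [Real.sqrt_zero, zero_div, Real.arctan_zero, mul_zero, zero_mul]
  ring
end

section
/- With the ergodic rate E(R) = (1/M)*(Λ1 + Λ2) from the downlink OMA analysis (Λ1 = log2(1 + η*ρ/(d^2 + D^2/4)), Λ2 = (4/(D ln 2))[sqrt(d^2+η*ρ) arctan(D/(2 sqrt(d^2+η*ρ))) − d arctan(D/(2d))]), the high-SNR slope lim_{ρ → ∞} E(R)/log2(ρ) equals 1/M. -/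
open Filter

lemma aux_arctan (a : ℝ) (ha : 0 < a) :
    Tendsto (fun x : ℝ => x * Real.arctan (a / (2 * x))) atTop (nhds (a/2)) := by
  have hslope : Tendsto (slope Real.arctan 0) (nhdsWithin (0:ℝ) {0}ᶜ) (nhds 1) := by
    have h := Real.hasDerivAt_arctan 0
    rw [hasDerivAt_iff_tendsto_slope] at h
    simpa using h
  have h1 : Tendsto (fun x : ℝ => a / (2 * x)) atTop (nhdsWithin (0:ℝ) {0}ᶜ) := by
    rw [tendsto_nhdsWithin_iff]
    constructor
    · simpa using Tendsto.div_atTop (tendsto_const_nhds (x := a)) (tendsto_id.const_mul_atTop two_pos)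
    · filter_upwards [eventually_gt_atTop (0:ℝ)] with x hx
      simp only [Set.mem_compl_iff, Set.mem_singleton_iff]
      exact (div_pos ha (by positivity)).ne'
  have h3 : Tendsto (fun x : ℝ => (a/2) * slope Real.arctan 0 (a / (2 * x))) atTop (nhds (a/2)) := by
    simpa using (hslope.comp h1).const_mul (a/2)
  refine h3.congr' ?_
  filter_upwards [eventually_gt_atTop (0:ℝ)] with x hx
  rw [slope_def_field]
  simp only [Real.arctan_zero, sub_zero]
  field_simp

lemma aux_log (c η : ℝ) (hc : 0 < c) (hη : 0 < η) :
    Tendsto (fun ρ : ℝ => Real.log (1 + η * ρ / c) / Real.log ρ) atTop (nhds 1) := by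
  have hinner : Tendsto (fun ρ : ℝ => Real.log (1/ρ + η/c)) atTop (nhds (Real.log (η/c))) := by
    have h0 : Tendsto (fun ρ:ℝ => 1/ρ + η/c) atTop (nhds (0 + η/c)) := by
      simpa [one_div] using (tendsto_inv_atTop_zero (𝕜 := ℝ)).add (tendsto_const_nhds (x := η/c))
    exact (Real.continuousAt_log (by positivity)).tendsto.comp (by simpa using h0)
  have h0 : Tendsto (fun ρ : ℝ => Real.log (1/ρ + η/c) / Real.log ρ) atTop (nhds 0) :=
    hinner.div_atTop Real.tendsto_log_atTop
  have hsum : Tendsto (fun ρ : ℝ => 1 + Real.log (1/ρ + η/c) / Real.log ρ) atTop (nhds 1) := by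
    simpa using (tendsto_const_nhds (x := (1:ℝ))).add h0
  refine hsum.congr' ?_
  filter_upwards [eventually_ge_atTop (2:ℝ)] with ρ hρ
  have hρ0 : (0:ℝ) < ρ := by linarith
  have hlρ : Real.log ρ ≠ 0 := (Real.log_pos (by linarith)).ne'
  have he : 1 + η*ρ/c = ρ * (1/ρ + η/c) := by field_simp
  rw [he, Real.log_mul hρ0.ne' (by positivity), add_div, div_self hlρ]

lemma aux_logb_ratio (x y : ℝ) :
    Real.logb 2 x / Real.logb 2 y = Real.log x / Real.log y := by
  have h2 : Real.log 2 ≠ 0 := (Real.log_pos (by norm_num)).ne'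
  rw [Real.logb, Real.logb, div_div_div_cancel_right₀ h2]

/-- High-SNR slope of the downlink OMA ergodic rate: `E(R)/log₂ ρ → 1/M`. -/
theorem stmt_7 (D d η : ℝ) (hD : 0 < D) (hd : 0 < d) (hη : 0 < η)
    (M : ℕ) (hM : 1 ≤ M) :
    Tendsto (fun ρ : ℝ =>
        ((1 / (M:ℝ)) *
          (Real.logb 2 (1 + η * ρ / (d^2 + D^2/4))
            + (4 / (D * Real.log 2)) *
              (Real.sqrt (d^2 + η * ρ) * Real.arctan (D / (2 * Real.sqrt (d^2 + η * ρ)))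
                - d * Real.arctan (D / (2 * d)))))
          / Real.logb 2 ρ)
      atTop (nhds (1 / (M:ℝ))) := by
  set c : ℝ := d^2 + D^2/4 with hc
  have hc0 : 0 < c := by positivity
  set k : ℝ := 4 / (D * Real.log 2) with hk
  set B : ℝ → ℝ := fun ρ =>
    k * (Real.sqrt (d^2 + η * ρ) * Real.arctan (D / (2 * Real.sqrt (d^2 + η * ρ)))
          - d * Real.arctan (D / (2 * d))) with hB
  -- A/L → 1
  have hA : Tendsto (fun ρ : ℝ => Real.logb 2 (1 + η * ρ / c) / Real.logb 2 ρ)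
      atTop (nhds 1) := by
    have := aux_log c η hc0 hη
    refine this.congr fun ρ => ?_
    rw [aux_logb_ratio]
  -- B → finite limit
  have hsqrt : Tendsto (fun ρ : ℝ => Real.sqrt (d^2 + η * ρ)) atTop atTop := by
    have hs : Tendsto Real.sqrt atTop atTop := by
      refine (tendsto_rpow_atTop (by norm_num : (0:ℝ) < 1/2)).congr fun x => ?_
      rw [Real.sqrt_eq_rpow]
    exact hs.comp (tendsto_atTop_add_const_left _ _ (tendsto_id.const_mul_atTop hη))
  have hBlim : Tendsto B atTop (nhds (k * (D/2 - d * Real.arctan (D / (2 * d))))) := by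
    apply Tendsto.const_mul
    exact ((aux_arctan D hD).comp hsqrt).sub tendsto_const_nhds
  have hLtop : Tendsto (fun ρ : ℝ => Real.logb 2 ρ) atTop atTop :=
    Real.tendsto_logb_atTop (by norm_num)
  have hB0 : Tendsto (fun ρ : ℝ => B ρ / Real.logb 2 ρ) atTop (nhds 0) :=
    hBlim.div_atTop hLtop
  have hmain : Tendsto (fun ρ : ℝ =>
      (1/(M:ℝ)) * (Real.logb 2 (1 + η * ρ / c) / Real.logb 2 ρ)
        + (1/(M:ℝ)) * (B ρ / Real.logb 2 ρ)) atTop (nhds (1/(M:ℝ))) := by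
    have := (hA.const_mul (1/(M:ℝ))).add (hB0.const_mul (1/(M:ℝ)))
    simpa using this
  refine hmain.congr fun ρ => ?_
  simp only [hB, hk, hc]
  ring
end

section
/- Consider downlink NOMA with M users, power allocation coefficients α_1 > ... > α_M > 0 summing to 1, transmit SNR ρ, and ordered channel gain Y_m (m-th order statistic of M i.i.d. copies of Y supported on [η/(d^2+D^2/4), η/d^2] with CDF F_Y(y) = 1 - (2/D)sqrt(η/y - d^2)). Assume R̃_k < log2(1 + α_k/Σ_{j>k}α_j) for all k ≤ m, and define ε_k = M / (ρ*(α_k/(2^{R̃_k} - 1) - Σ_{j=k+1}^M α_j)) and λ_m = max{ε_1,...,ε_m}. Then the outage probability of user m, i.e., P(min_{k≤m} (R_{m,k} - R̃_k) < 0) where R_{m,k} = log2(1 + Y_m*(ρ/M)*α_k / (Y_m*(ρ/M)*Σ_{j>k}α_j + 1)), equals 0 if λ_m < η/(d^2 + D^2/4), equals F_{Y_m}(λ_m) if η/(d^2+D^2/4) ≤ λ_m < η/d^2, and equals 1 if λ_m ≥ η/d^2. -/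
open MeasureTheory Filter Topology

set_option maxHeartbeats 1600000 in
/-- Downlink NOMA outage probability of the `m`-th ordered user. -/
theorem stmt_9
    {Ω : Type*} [MeasurableSpace Ω] (μ : Measure Ω) [IsProbabilityMeasure μ]
    (M m : ℕ) (hm1 : 1 ≤ m) (hmM : m ≤ M)
    (D d η ρ : ℝ) (hD : 0 < D) (hd : 0 < d) (hη : 0 < η) (hρ : 0 < ρ)
    (α R : ℕ → ℝ)
    (hαpos : ∀ k ∈ Finset.Icc 1 M, 0 < α k)
    (hαanti : ∀ i ∈ Finset.Icc 1 M, ∀ j ∈ Finset.Icc 1 M, i < j → α j < α i)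
    (hαsum : ∑ k ∈ Finset.Icc 1 M, α k = 1)
    (hRpos : ∀ k ∈ Finset.Icc 1 M, 0 < R k)
    (hRlt : ∀ k ∈ Finset.Icc 1 m,
      R k < Real.logb 2 (1 + α k / ∑ j ∈ Finset.Icc (k+1) M, α j))
    (Ym : Ω → ℝ) (hYm : Measurable Ym)
    (FY : ℝ → ℝ)
    (hFY : ∀ y, FY y =
      if y < η / (d^2 + D^2/4) then 0
      else if y < η / d^2 then 1 - (2/D) * Real.sqrt (η / y - d^2)
      else 1)
    (hCDF : ∀ y : ℝ, (μ {ω | Ym ω ≤ y}).toReal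
      = ∑ j ∈ Finset.Icc m M, (M.choose j : ℝ) * (FY y)^j * (1 - FY y)^(M-j))
    (ε : ℕ → ℝ)
    (hε : ∀ k, ε k = M / (ρ * (α k / ((2:ℝ) ^ (R k) - 1)
      - ∑ j ∈ Finset.Icc (k+1) M, α j)))
    (lam : ℝ) (hlam : lam = (Finset.Icc 1 m).sup' (Finset.nonempty_Icc.2 hm1) ε) :
    (μ {ω | ∃ k ∈ Finset.Icc 1 m,
        Real.logb 2 (1 + Ym ω * (ρ/M) * α k /
          (Ym ω * (ρ/M) * (∑ j ∈ Finset.Icc (k+1) M, α j) + 1)) < R k}).toReal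
      = if lam < η / (d^2 + D^2/4) then 0
        else if lam < η / d^2 then
          ∑ j ∈ Finset.Icc m M, (M.choose j : ℝ) * (FY lam)^j * (1 - FY lam)^(M-j)
        else 1 := by
  have hdD : (0:ℝ) < d^2 + D^2/4 := by positivity
  set y0 : ℝ := η / (d^2 + D^2/4) with hy0def
  set y1 : ℝ := η / d^2 with hy1def
  have hy0pos : 0 < y0 := by positivity
  have hy01 : y0 < y1 := by
    apply div_lt_div_of_pos_left hη (by positivity)
    nlinarith [sq_nonneg D]
  -- m < M, else contradiction
  rcases eq_or_lt_of_le hmM with hmeq | hmM'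
  · exfalso
    have h1 := hRlt m (Finset.mem_Icc.2 ⟨hm1, le_refl m⟩)
    have h2 := hRpos m (Finset.mem_Icc.2 ⟨hm1, hmM⟩)
    rw [show Finset.Icc (m+1) M = ∅ from Finset.Icc_eq_empty (by omega)] at h1
    simp at h1
    linarith
  have hMpos : (0:ℝ) < M := by
    have : 0 < M := by omega
    exact_mod_cast this
  -- zero CDF facts
  have hsum0 : ∀ y, FY y = 0 → (μ {ω | Ym ω ≤ y}).toReal = 0 := by
    intro y hy
    rw [hCDF y, hy]
    apply Finset.sum_eq_zero
    intro j hj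
    simp only [Finset.mem_Icc] at hj
    simp [zero_pow (show j ≠ 0 by omega)]
  have hmeas0 : ∀ y, FY y = 0 → μ {ω | Ym ω ≤ y} = 0 := by
    intro y hy
    rcases (ENNReal.toReal_eq_zero_iff _).1 (hsum0 y hy) with h | h
    · exact h
    · exact absurd h (measure_ne_top μ _)
  have hFY0 : FY 0 = 0 := by rw [hFY 0, if_pos hy0pos]
  have hae : ∀ᵐ ω ∂μ, 0 < Ym ω := by
    rw [ae_iff]
    simp only [not_lt]
    exact hmeas0 0 hFY0
  -- key pointwise equivalence
  have hkey : ∀ k ∈ Finset.Icc 1 m, ∀ x : ℝ, 0 < x →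
      (Real.logb 2 (1 + x * (ρ/M) * α k /
          (x * (ρ/M) * (∑ j ∈ Finset.Icc (k+1) M, α j) + 1)) < R k ↔ x < ε k) := by
    intro k hk x hx
    simp only [Finset.mem_Icc] at hk
    set S := ∑ j ∈ Finset.Icc (k+1) M, α j with hS
    set a := α k with ha
    set t := (2:ℝ) ^ (R k) - 1 with ht
    have hkM : k ∈ Finset.Icc 1 M := Finset.mem_Icc.2 ⟨hk.1, le_trans hk.2 hmM⟩
    have hapos : 0 < a := hαpos k hkM
    have hSpos : 0 < S := by
      apply Finset.sum_pos
      · intro j hj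
        simp only [Finset.mem_Icc] at hj
        exact hαpos j (Finset.mem_Icc.2 ⟨by omega, hj.2⟩)
      · exact Finset.nonempty_Icc.2 (by omega)
    have htpos : 0 < t := by
      have h2 : (1:ℝ) < 2 ^ (R k) := by
        have h3 := hRpos k hkM
        calc (1:ℝ) = 2 ^ (0:ℝ) := by norm_num
        _ < 2 ^ (R k) := (Real.rpow_lt_rpow_left_iff (by norm_num)).2 h3
      rw [ht]; linarith
    have htS : t * S < a := by
      have h1 := hRlt k (Finset.mem_Icc.2 hk)
      have harg : 0 < 1 + a / S := by positivity
      have h2 : (2:ℝ) ^ (R k) < 1 + a / S := by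
        calc (2:ℝ) ^ (R k) < 2 ^ Real.logb 2 (1 + a/S) :=
              (Real.rpow_lt_rpow_left_iff (by norm_num)).2 h1
        _ = 1 + a/S := Real.rpow_logb (by norm_num) (by norm_num) harg
      have h3 : t < a / S := by rw [ht]; linarith
      exact (lt_div_iff₀ hSpos).1 h3
    have hats : 0 < a - t * S := by linarith
    have hεk : ε k = t / (a - t * S) * (M / ρ) := by
      rw [hε k, ← hS, ← ha, ← ht]
      field_simp
    set c := x * (ρ / (M:ℝ)) with hc
    have hcpos : 0 < c := mul_pos hx (div_pos hρ hMpos)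
    have hden : 0 < c * S + 1 := by nlinarith
    have harg : 0 < 1 + c * a / (c * S + 1) := by
      have := div_nonneg (mul_pos hcpos hapos).le hden.le
      linarith
    rw [Real.logb_lt_iff_lt_rpow (by norm_num) harg]
    have step1 : 1 + c*a/(c*S+1) < 2 ^ R k ↔ c * a / (c*S+1) < t := by
      rw [ht]; constructor <;> intro <;> linarith
    rw [step1, div_lt_iff₀ hden]
    have step2 : c * a < t * (c*S+1) ↔ c < t/(a - t*S) := by
      rw [lt_div_iff₀ hats]
      constructor <;> intro h <;> nlinarith
    rw [step2, hεk, hc]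
    rw [show x * (ρ/(M:ℝ)) = x*ρ/(M:ℝ) by ring, div_lt_iff₀ hMpos,
        show t/(a-t*S)*((M:ℝ)/ρ) = t/(a-t*S)*(M:ℝ)/ρ by ring, lt_div_iff₀ hρ]
  -- event measure
  have hμE : μ {ω | ∃ k ∈ Finset.Icc 1 m,
        Real.logb 2 (1 + Ym ω * (ρ/M) * α k /
          (Ym ω * (ρ/M) * (∑ j ∈ Finset.Icc (k+1) M, α j) + 1)) < R k}
      = μ {ω | Ym ω < lam} := by
    apply measure_congr
    filter_upwards [hae] with ω hω
    have hiff : (∃ k ∈ Finset.Icc 1 m,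
        Real.logb 2 (1 + Ym ω * (ρ/M) * α k /
          (Ym ω * (ρ/M) * (∑ j ∈ Finset.Icc (k+1) M, α j) + 1)) < R k) ↔ Ym ω < lam := by
      rw [hlam, Finset.lt_sup'_iff]
      constructor
      · rintro ⟨k, hk, h⟩; exact ⟨k, hk, (hkey k hk _ hω).1 h⟩
      · rintro ⟨k, hk, h⟩; exact ⟨k, hk, (hkey k hk _ hω).2 h⟩
    exact eq_iff_iff.2 hiff
  -- the limit lemma on [y0, y1]
  have hlim : ∀ L : ℝ, y0 ≤ L → L ≤ y1 →
      (μ {ω | Ym ω < L}).toReal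
        = ∑ j ∈ Finset.Icc m M, (M.choose j : ℝ) * (FY L)^j * (1 - FY L)^(M-j) := by
    intro L hL0 hL1
    have hLpos : 0 < L := lt_of_lt_of_le hy0pos hL0
    set s : ℕ → Set Ω := fun n => {ω | Ym ω ≤ L - 1/((n:ℝ)+1)} with hs
    have hmono : Monotone s := by
      intro i j hij ω hω
      simp only [hs, Set.mem_setOf_eq] at *
      have hij' : ((i:ℝ)+1) ≤ (j:ℝ)+1 := by exact_mod_cast Nat.succ_le_succ hij
      have : 1/((j:ℝ)+1) ≤ 1/((i:ℝ)+1) :=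
        one_div_le_one_div_of_le (by positivity) hij'
      linarith
    have hunion : ⋃ n, s n = {ω | Ym ω < L} := by
      ext ω
      simp only [hs, Set.mem_iUnion, Set.mem_setOf_eq]
      constructor
      · rintro ⟨n, hn⟩
        have : (0:ℝ) < 1/((n:ℝ)+1) := by positivity
        linarith
      · intro h
        obtain ⟨n, hn⟩ := exists_nat_one_div_lt (show (0:ℝ) < L - Ym ω by linarith)
        exact ⟨n, by linarith⟩
    have ht1 : Tendsto (fun n => μ (s n)) atTop (𝓝 (μ {ω | Ym ω < L})) := by
      rw [← hunion]; exact tendsto_measure_iUnion_atTop hmono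
    have ht2 : Tendsto (fun n => (μ (s n)).toReal) atTop
        (𝓝 ((μ {ω | Ym ω < L}).toReal)) :=
      (ENNReal.tendsto_toReal (measure_ne_top μ _)).comp ht1
    have hFYlim : Tendsto (fun n : ℕ => FY (L - 1/((n:ℝ)+1))) atTop (𝓝 (FY L)) := by
      rcases eq_or_lt_of_le hL0 with hLeq | hLgt
      · -- L = y0
        have hFYL : FY L = 0 := by
          rw [hFY L, if_neg (by rw [← hLeq]; exact lt_irrefl _),
              if_pos (by rw [← hLeq]; exact hy01)]
          have he : η / L = d^2 + D^2/4 := by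
            rw [← hLeq, hy0def]; field_simp
          rw [he, show d^2 + D^2/4 - d^2 = (D/2)^2 by ring,
              Real.sqrt_sq (by positivity)]
          field_simp
          norm_num
        have hconst : ∀ n : ℕ, FY (L - 1/((n:ℝ)+1)) = 0 := by
          intro n
          have hpos : (0:ℝ) < 1/((n:ℝ)+1) := by positivity
          rw [hFY _, if_pos (by rw [← hLeq]; linarith)]
        rw [hFYL]
        exact Tendsto.congr (fun n => (hconst n).symm) tendsto_const_nhds
      · -- y0 < L
        have halim : Tendsto (fun n : ℕ => L - 1/((n:ℝ)+1)) atTop (𝓝 L) := by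
          have h := Tendsto.const_sub (f := fun n : ℕ => 1/((n:ℝ)+1)) L
            tendsto_one_div_add_atTop_nhds_zero_nat
          simpa using h
        have hcont : Tendsto
            (fun n : ℕ => 1 - (2/D) * Real.sqrt (η/(L - 1/((n:ℝ)+1)) - d^2)) atTop
            (𝓝 (1 - (2/D) * Real.sqrt (η/L - d^2))) := by
          apply Tendsto.const_sub
          apply Tendsto.const_mul
          exact (Real.continuous_sqrt.tendsto _).comp
            ((tendsto_const_nhds.div halim hLpos.ne').sub_const _)
        have hFYL : FY L = 1 - (2/D) * Real.sqrt (η/L - d^2) := by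
          rcases eq_or_lt_of_le hL1 with h | h
          · rw [hFY L, if_neg (not_lt.2 hLgt.le), if_neg (not_lt.2 (le_of_eq h.symm))]
            have he : η / L = d^2 := by
              rw [h, hy1def]; field_simp
            rw [he]; simp
          · rw [hFY L, if_neg (not_lt.2 hLgt.le), if_pos h]
        have hev : ∀ᶠ n : ℕ in atTop,
            FY (L - 1/((n:ℝ)+1)) = 1 - (2/D) * Real.sqrt (η/(L - 1/((n:ℝ)+1)) - d^2) := by
          filter_upwards [tendsto_one_div_add_atTop_nhds_zero_nat.eventually_lt_const
            (show (0:ℝ) < L - y0 by linarith)] with n hn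
          have hpos : (0:ℝ) < 1/((n:ℝ)+1) := by positivity
          rw [hFY _, if_neg (by push_neg; linarith), if_pos (by linarith)]
        rw [hFYL]
        exact Tendsto.congr' (hev.mono fun n h => h.symm) hcont
    have hg : Continuous (fun p : ℝ =>
        ∑ j ∈ Finset.Icc m M, (M.choose j : ℝ) * p^j * (1-p)^(M-j)) := by
      apply continuous_finset_sum
      intro j _
      fun_prop
    have ht3 : Tendsto (fun n : ℕ => ∑ j ∈ Finset.Icc m M,
        (M.choose j : ℝ) * (FY (L - 1/((n:ℝ)+1)))^j * (1 - FY (L - 1/((n:ℝ)+1)))^(M-j))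
        atTop (𝓝 (∑ j ∈ Finset.Icc m M,
          (M.choose j : ℝ) * (FY L)^j * (1 - FY L)^(M-j))) :=
      (hg.tendsto _).comp hFYlim
    have heq : (fun n : ℕ => (μ (s n)).toReal) = fun n : ℕ => ∑ j ∈ Finset.Icc m M,
        (M.choose j : ℝ) * (FY (L - 1/((n:ℝ)+1)))^j * (1 - FY (L - 1/((n:ℝ)+1)))^(M-j) := by
      funext n; exact hCDF _
    rw [heq] at ht2
    exact tendsto_nhds_unique ht2 ht3
  -- assemble
  rw [hμE]
  by_cases h1 : lam < y0
  · rw [if_pos h1]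
    have hFYlam : FY lam = 0 := by rw [hFY lam, if_pos h1]
    have hsub : {ω | Ym ω < lam} ⊆ {ω | Ym ω ≤ lam} := by
      intro ω hω
      simp only [Set.mem_setOf_eq] at *
      exact le_of_lt hω
    have hz : μ {ω | Ym ω < lam} = 0 :=
      measure_mono_null hsub (hmeas0 lam hFYlam)
    rw [hz]; simp
  · rw [if_neg h1]
    push_neg at h1
    by_cases h2 : lam < y1
    · rw [if_pos h2]
      exact hlim lam h1 h2.le
    · rw [if_neg h2]
      push_neg at h2
      have hFY1 : FY y1 = 1 := by
        rw [hFY y1, if_neg (not_lt.2 hy01.le), if_neg (lt_irrefl _)]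
      have hsum1 : ∑ j ∈ Finset.Icc m M,
          (M.choose j : ℝ) * (FY y1)^j * (1 - FY y1)^(M-j) = 1 := by
        rw [hFY1, Finset.sum_eq_single M]
        · simp
        · intro j hj hjM
          simp only [Finset.mem_Icc] at hj
          rw [sub_self, zero_pow (by omega), mul_zero]
        · intro h; exact absurd (Finset.mem_Icc.2 ⟨hmM, le_refl M⟩) h
      rcases eq_or_lt_of_le h2 with heq | hlt
      · rw [hlim lam h1 (le_of_eq heq.symm), ← heq]
        exact hsum1
      · have hμy1 : μ {ω | Ym ω ≤ y1} = 1 := by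
          have h := hCDF y1
          rw [hsum1] at h
          exact (ENNReal.toReal_eq_one_iff _).1 h
        have hle : μ {ω | Ym ω ≤ y1} ≤ μ {ω | Ym ω < lam} := by
          apply measure_mono
          intro ω hω
          simp only [Set.mem_setOf_eq] at *
          exact lt_of_le_of_lt hω hlt
        have hone : μ {ω | Ym ω < lam} = 1 :=
          le_antisymm prob_le_one (hμy1 ▸ hle)
        rw [hone]; simp
end

section
/- In the downlink NOMA setting above, for ρ ≥ ((d^2 + D^2/4)/η) * max{γ_1, ..., γ_m}, where γ_k = M / (α_k/(2^{R̃_k} - 1) - Σ_{j=k+1}^M α_j), the outage probability of user m is exactly 0. -/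
open MeasureTheory

/-- Downlink NOMA: for `ρ ≥ ((d² + D²/4)/η) · max{γ₁,…,γₘ}` the outage
probability of the `m`-th ordered user is exactly zero. -/
theorem stmt_10
    {Ω : Type*} [MeasurableSpace Ω] (μ : Measure Ω) [IsProbabilityMeasure μ]
    (M m : ℕ) (hm1 : 1 ≤ m) (hmM : m ≤ M)
    (D d η ρ : ℝ) (hD : 0 < D) (hd : 0 < d) (hη : 0 < η) (hρ : 0 < ρ)
    (α R : ℕ → ℝ)
    (hαpos : ∀ k ∈ Finset.Icc 1 M, 0 < α k)
    (hαanti : ∀ i ∈ Finset.Icc 1 M, ∀ j ∈ Finset.Icc 1 M, i < j → α j < α i)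
    (hαsum : ∑ k ∈ Finset.Icc 1 M, α k = 1)
    (hRpos : ∀ k ∈ Finset.Icc 1 M, 0 < R k)
    (hRlt : ∀ k ∈ Finset.Icc 1 m,
      R k < Real.logb 2 (1 + α k / ∑ j ∈ Finset.Icc (k+1) M, α j))
    (Ym : Ω → ℝ) (hYm : Measurable Ym)
    (FY : ℝ → ℝ)
    (hFY : ∀ y, FY y =
      if y < η / (d^2 + D^2/4) then 0
      else if y < η / d^2 then 1 - (2/D) * Real.sqrt (η / y - d^2)
      else 1)
    (hCDF : ∀ y : ℝ, (μ {ω | Ym ω ≤ y}).toReal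
      = ∑ j ∈ Finset.Icc m M, (M.choose j : ℝ) * (FY y)^j * (1 - FY y)^(M-j))
    (γ : ℕ → ℝ)
    (hγ : ∀ k, γ k = M / (α k / ((2:ℝ) ^ (R k) - 1)
      - ∑ j ∈ Finset.Icc (k+1) M, α j))
    (hρbig : ((d^2 + D^2/4) / η) *
      (Finset.Icc 1 m).sup' (Finset.nonempty_Icc.2 hm1) γ ≤ ρ) :
    (μ {ω | ∃ k ∈ Finset.Icc 1 m,
        Real.logb 2 (1 + Ym ω * (ρ/M) * α k /
          (Ym ω * (ρ/M) * (∑ j ∈ Finset.Icc (k+1) M, α j) + 1)) < R k}).toReal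
      = 0 := by
  have hA : (0:ℝ) < d^2 + D^2/4 := by positivity
  set y₀ : ℝ := η / (d^2 + D^2/4) with hy₀
  have hy₀pos : 0 < y₀ := by positivity
  have hMpos : (0:ℝ) < M := by
    exact_mod_cast Nat.lt_of_lt_of_le (Nat.lt_of_lt_of_le Nat.zero_lt_one hm1) hmM
  -- Step 1: CDF is 0 below y₀
  have hzero : ∀ y : ℝ, y < y₀ → μ {ω | Ym ω ≤ y} = 0 := by
    intro y hy
    have hFY0 : FY y = 0 := by rw [hFY]; simp [hy]
    have htr : (μ {ω | Ym ω ≤ y}).toReal = 0 := by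
      rw [hCDF, Finset.sum_eq_zero]
      intro j hj
      have hj1 : 1 ≤ j := le_trans hm1 (Finset.mem_Icc.1 hj).1
      rw [hFY0, zero_pow (by omega)]
      ring
    have hne : μ {ω | Ym ω ≤ y} ≠ ⊤ := measure_ne_top μ _
    exact (ENNReal.toReal_eq_zero_iff _).1 htr |>.resolve_right hne
  -- Step 2: measure of {Ym < y₀} is 0
  have hlt0 : μ {ω | Ym ω < y₀} = 0 := by
    have hsub : {ω | Ym ω < y₀} ⊆ ⋃ n : ℕ, {ω | Ym ω ≤ y₀ - 1/(n+1)} := by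
      intro ω hω
      obtain ⟨n, hn⟩ := exists_nat_one_div_lt (K := ℝ) (sub_pos.2 hω)
      exact Set.mem_iUnion.2 ⟨n, by simp only [Set.mem_setOf_eq]; linarith⟩
    refine measure_mono_null hsub (measure_iUnion_null fun n => hzero _ ?_)
    have : (0:ℝ) < 1/(n+1) := by positivity
    linarith
  -- Step 3: the outage event is contained in {Ym < y₀}
  have hsub : {ω | ∃ k ∈ Finset.Icc 1 m,
        Real.logb 2 (1 + Ym ω * (ρ/M) * α k /
          (Ym ω * (ρ/M) * (∑ j ∈ Finset.Icc (k+1) M, α j) + 1)) < R k}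
      ⊆ {ω | Ym ω < y₀} := by
    intro ω hω
    obtain ⟨k, hk, hout⟩ := hω
    have hkM : k ∈ Finset.Icc 1 M :=
      Finset.mem_Icc.2 ⟨(Finset.mem_Icc.1 hk).1, le_trans (Finset.mem_Icc.1 hk).2 hmM⟩
    have hk1 : 1 ≤ k := (Finset.mem_Icc.1 hk).1
    have hαk : 0 < α k := hαpos k hkM
    have hRk : 0 < R k := hRpos k hkM
    set S : ℝ := ∑ j ∈ Finset.Icc (k+1) M, α j with hS
    have hSnn : 0 ≤ S := Finset.sum_nonneg fun j hj => le_of_lt (hαpos j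
      (Finset.mem_Icc.2 ⟨by have := (Finset.mem_Icc.1 hj).1; omega, (Finset.mem_Icc.1 hj).2⟩))
    set c : ℝ := (2:ℝ) ^ (R k) - 1 with hc
    have hcpos : 0 < c := by
      have : (1:ℝ) < (2:ℝ) ^ (R k) := Real.one_lt_rpow_iff_of_pos (by norm_num) |>.2
        (Or.inl ⟨by norm_num, hRk⟩)
      linarith
    -- from hRlt: c * S < α k
    have hcS : c * S < α k := by
      have h1 : R k < Real.logb 2 (1 + α k / S) := hRlt k hk
      by_cases hS0 : S = 0
      · exfalso
        rw [hS0] at h1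
        simp at h1
        linarith
      have hSpos : 0 < S := lt_of_le_of_ne hSnn (Ne.symm hS0)
      have h2 : (2:ℝ) ^ (R k) < 1 + α k / S := by
        rw [← Real.lt_logb_iff_rpow_lt (by norm_num) (by positivity)]
        exact h1
      have h3 : c < α k / S := by simp only [hc]; linarith
      calc c * S < (α k / S) * S := by exact mul_lt_mul_of_pos_right h3 hSpos
        _ = α k := div_mul_cancel₀ _ (ne_of_gt hSpos)
    have hden : 0 < α k / c - S := by
      rw [sub_pos, lt_div_iff₀ hcpos]
      linarith [hcS]
    -- case on sign of Ym ω
    rcases le_or_gt (Ym ω) 0 with hle | hpos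
    · exact lt_of_le_of_lt hle hy₀pos
    set x : ℝ := Ym ω * (ρ/M) with hx
    have hxpos : 0 < x := by positivity
    have hdenom : 0 < x * S + 1 := by positivity
    have harg : 0 < 1 + x * α k / (x * S + 1) := by positivity
    have h4 : 1 + x * α k / (x * S + 1) < (2:ℝ) ^ (R k) := by
      rw [← Real.logb_lt_iff_lt_rpow (by norm_num) harg]
      exact hout
    have h5 : x * α k / (x * S + 1) < c := by simp only [hc]; linarith
    have h6 : x * α k < c * (x * S + 1) := by
      rw [div_lt_iff₀ hdenom] at h5; linarith
    -- so x * (α k - c*S) < c, and hence Ym ω < γ k / ρ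
    have h7 : x * (α k - c * S) < c := by nlinarith
    have hγk : γ k = M * c / (α k - c * S) := by
      rw [hγ, ← hS, ← hc]
      rw [div_eq_div_iff (by linarith [hden]) (by linarith [hcS])]
      field_simp
    have hYlt : Ym ω < γ k / ρ := by
      have hd2 : (0:ℝ) < α k - c * S := by linarith
      rw [hγk, div_div]
      rw [lt_div_iff₀ (by positivity)]
      have hxY : x = Ym ω * ρ / M := by rw [hx]; ring
      have : Ym ω * ρ / M * (α k - c * S) < c := by rw [← hxY]; exact h7
      calc Ym ω * ((α k - c * S) * ρ) = (Ym ω * ρ / M * (α k - c * S)) * M := by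
            field_simp
        _ < c * M := by exact mul_lt_mul_of_pos_right this hMpos
        _ = M * c := by ring
    have hγle : γ k ≤ (Finset.Icc 1 m).sup' (Finset.nonempty_Icc.2 hm1) γ :=
      Finset.le_sup' γ hk
    have hmax : (Finset.Icc 1 m).sup' (Finset.nonempty_Icc.2 hm1) γ / ρ ≤ y₀ := by
      rw [hy₀, div_le_div_iff₀ hρ hA]
      have hAη : (0:ℝ) < (d^2 + D^2/4) / η := by positivity
      calc (Finset.Icc 1 m).sup' (Finset.nonempty_Icc.2 hm1) γ * (d^2 + D^2/4)
          = ((d^2 + D^2/4)/η * (Finset.Icc 1 m).sup' (Finset.nonempty_Icc.2 hm1) γ) * η := by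
            field_simp
        _ ≤ ρ * η := mul_le_mul_of_nonneg_right hρbig (le_of_lt hη)
        _ = η * ρ := by ring
    calc Ym ω < γ k / ρ := hYlt
      _ ≤ (Finset.Icc 1 m).sup' (Finset.nonempty_Icc.2 hm1) γ / ρ := by gcongr
      _ ≤ y₀ := hmax
  have : μ {ω | ∃ k ∈ Finset.Icc 1 m,
        Real.logb 2 (1 + Ym ω * (ρ/M) * α k /
          (Ym ω * (ρ/M) * (∑ j ∈ Finset.Icc (k+1) M, α j) + 1)) < R k} = 0 :=
    measure_mono_null hsub hlt0
  rw [this]; rfl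
end

section
/- Let Y have density f_Y(y) = η/(D y^2 sqrt(η/y - d^2)) on [η/(d^2+D^2/4), η/d^2], and let Y_m be the m-th order statistic from M i.i.d. copies. Then E[1/Y_m] = (M/η) * C(M-1, m-1) * (2/D)^{M-m+1} * Σ_{k=0}^{m-1} C(m-1,k) * (-2/D)^k * [ (D/2)^{M-m+k+3}/(M-m+k+3) + (D/2)^{M-m+k+1} d^2/(M-m+k+1) ]. -/
open MeasureTheory

/-- Closed form of `E[1/Yₘ]` for the `m`-th order statistic of the channel
gain, computed against the order-statistic density. -/
theorem stmt_11 (D d η : ℝ) (hD : 0 < D) (hd : 0 < d) (hη : 0 < η)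
    (M m : ℕ) (hm1 : 1 ≤ m) (hmM : m ≤ M)
    (fY FY : ℝ → ℝ)
    (hfY : ∀ y, fY y = η / (D * y^2 * Real.sqrt (η / y - d^2)))
    (hFY : ∀ y, FY y = 1 - (2/D) * Real.sqrt (η / y - d^2)) :
    ∫ y in Set.Icc (η / (d^2 + D^2/4)) (η / d^2),
        (1 / y) * ((M : ℝ) * ((M-1).choose (m-1) : ℝ) * fY y *
          (FY y)^(m-1) * (1 - FY y)^(M-m))
      = ((M : ℝ) / η) * ((M-1).choose (m-1) : ℝ) * (2/D)^(M-m+1) *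
          ∑ k ∈ Finset.range m,
            ((m-1).choose k : ℝ) * (-(2/D))^k *
              ((D/2)^(M-m+k+3) / ((M-m+k+3 : ℕ) : ℝ)
                + (D/2)^(M-m+k+1) * d^2 / ((M-m+k+1 : ℕ) : ℝ)) := by
  have hd2 : (0:ℝ) < d ^ 2 := by positivity
  set a : ℝ := η / (d^2 + D^2/4) with ha
  set b : ℝ := η / d^2 with hb
  have hapos : 0 < a := by positivity
  have hab : a < b := by
    apply div_lt_div_of_pos_left hη hd2
    nlinarith
  have hηa : η / a = d^2 + D^2/4 := by
    rw [ha]; field_simp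
  have hηb : η / b = d^2 := by
    rw [hb]; field_simp
  set c : ℝ := (M : ℝ) * ((M-1).choose (m-1) : ℝ) with hc
  set f : ℝ → ℝ := fun y =>
    1 / y * (c * fY y * FY y ^ (m-1) * (1 - FY y) ^ (M-m)) with hf
  set s : ℝ → ℝ := fun y => Real.sqrt (η / y - d^2) with hs
  set P : ℝ → ℝ := fun t => -(2*c/(η*D)) * (2/D)^(M-m) *
      ∑ k ∈ Finset.range m, ((m-1).choose k : ℝ) * (-(2/D))^k *
        (t^(M-m+k+3) / ((M-m+k+3 : ℕ) : ℝ)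
          + t^(M-m+k+1) * d^2 / ((M-m+k+1 : ℕ) : ℝ)) with hP
  -- derivative
  have hderiv : ∀ y ∈ Set.Ioo a b, HasDerivAt (fun y => P (s y)) (f y) y := by
    intro y hy
    have hy0 : 0 < y := lt_trans hapos hy.1
    have hlt1 : η / y < η / a := div_lt_div_of_pos_left hη hapos hy.1
    have hlt2 : η / b < η / y := div_lt_div_of_pos_left hη hy0 hy.2
    rw [hηa] at hlt1
    rw [hηb] at hlt2
    have hu : 0 < η / y - d^2 := by linarith
    set t : ℝ := s y with htdef
    have ht0 : 0 < t := Real.sqrt_pos.mpr hu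
    have ht2 : t^2 = η / y - d^2 := Real.sq_sqrt hu.le
    have htD : t < D/2 := by
      apply lt_of_pow_lt_pow_left₀ 2 (by positivity)
      nlinarith
    -- derivative of s
    have hu' : HasDerivAt (fun y : ℝ => η / y - d^2) (-(η / y^2)) y := by
      have h1 : HasDerivAt (fun y : ℝ => η / y) (-(η / y^2)) y := by
        have := (hasDerivAt_inv hy0.ne').const_mul η
        simp only [div_eq_mul_inv]
        refine this.congr_deriv ?_
        ring
      simpa using h1.sub_const (d^2)
    have hst : HasDerivAt s (-(η / y^2) / (2 * t)) y := by
      have := hu'.sqrt hu.ne'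
      simpa [hs] using this
    -- derivative of P
    have hPd : HasDerivAt P (-(2*c/(η*D)) * (2/D)^(M-m) *
        ∑ k ∈ Finset.range m, ((m-1).choose k : ℝ) * (-(2/D))^k *
          (t^(M-m+k+2) + t^(M-m+k) * d^2)) t := by
      apply HasDerivAt.const_mul
      apply HasDerivAt.fun_sum
      intro k _
      apply HasDerivAt.const_mul
      have h3 : HasDerivAt (fun x : ℝ => x^(M-m+k+3) / ((M-m+k+3 : ℕ) : ℝ))
          (t^(M-m+k+2)) t := by
        have := (hasDerivAt_pow (M-m+k+3) t).div_const ((M-m+k+3 : ℕ) : ℝ)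
        refine this.congr_deriv ?_
        have hne : ((M-m+k+3 : ℕ) : ℝ) ≠ 0 := by positivity
        rw [show M-m+k+3-1 = M-m+k+2 from rfl]
        exact (mul_div_cancel_left₀ _ hne)
      have h1 : HasDerivAt (fun x : ℝ => x^(M-m+k+1) * d^2 / ((M-m+k+1 : ℕ) : ℝ))
          (t^(M-m+k) * d^2) t := by
        have := ((hasDerivAt_pow (M-m+k+1) t).mul_const (d^2)).div_const ((M-m+k+1 : ℕ) : ℝ)
        refine this.congr_deriv ?_
        have hne : ((M-m+k+1 : ℕ) : ℝ) ≠ 0 := by positivity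
        rw [show M-m+k+1-1 = M-m+k from rfl, mul_assoc]
        exact (mul_div_cancel_left₀ _ hne)
      exact h3.add h1
    have hcomp := hPd.comp y hst
    have hbin : ∑ k ∈ Finset.range m, ((m-1).choose k : ℝ) * (-(2/D))^k *
        (t^(M-m+k+2) + t^(M-m+k) * d^2)
        = (t^2 + d^2) * t^(M-m) * (1 - 2/D * t)^(m-1) := by
      have hm : m - 1 + 1 = m := Nat.succ_pred_eq_of_pos hm1
      rw [show (1:ℝ) - 2/D * t = -(2/D) * t + 1 by ring, add_pow, hm, Finset.mul_sum]
      exact Finset.sum_congr rfl fun k _ => by ring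
    have hval : (-(2*c/(η*D)) * (2/D)^(M-m) *
        ∑ k ∈ Finset.range m, ((m-1).choose k : ℝ) * (-(2/D))^k *
          (t^(M-m+k+2) + t^(M-m+k) * d^2)) * (-(η / y^2) / (2 * t)) = f y := by
      rw [hbin]
      simp only [hf]
      rw [hfY y, hFY y]
      have hsq : Real.sqrt (η / y - d^2) = t := rfl
      rw [hsq]
      have hty : t^2 + d^2 = η / y := by rw [ht2]; ring
      rw [hty]
      have h1F : (1:ℝ) - (1 - 2/D * t) = 2/D * t := by ring
      rw [h1F, mul_pow]
      field_simp
    rw [← hval]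
    exact hcomp
  -- nonnegativity
  have hnn : ∀ y ∈ Set.Ioo a b, 0 ≤ f y := by
    intro y hy
    have hy0 : 0 < y := lt_trans hapos hy.1
    have hlt1 : η / y < η / a := div_lt_div_of_pos_left hη hapos hy.1
    rw [hηa] at hlt1
    have hsnn : 0 ≤ Real.sqrt (η / y - d^2) := Real.sqrt_nonneg _
    have hsle : Real.sqrt (η / y - d^2) ≤ D/2 := by
      rw [show D/2 = Real.sqrt ((D/2)^2) from (Real.sqrt_sq (by positivity)).symm]
      apply Real.sqrt_le_sqrt
      nlinarith
    have hFnn : 0 ≤ FY y := by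
      rw [hFY y]
      have : 2/D * Real.sqrt (η / y - d^2) ≤ 2/D * (D/2) := by
        apply mul_le_mul_of_nonneg_left hsle (by positivity)
      have h2 : 2/D * (D/2) = 1 := by field_simp
      linarith
    have h1Fnn : 0 ≤ 1 - FY y := by
      rw [hFY y]
      have : 0 ≤ 2/D * Real.sqrt (η / y - d^2) := by positivity
      linarith
    have hfYnn : 0 ≤ fY y := by
      rw [hfY y]
      apply div_nonneg hη.le
      positivity
    have hcnn : 0 ≤ c := by positivity
    rw [hf]
    have : (0:ℝ) ≤ 1 / y := by positivity
    exact mul_nonneg this (mul_nonneg (mul_nonneg (mul_nonneg hcnn hfYnn)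
      (pow_nonneg hFnn _)) (pow_nonneg h1Fnn _))
  -- continuity of antiderivative
  have hscont : ContinuousOn s (Set.Icc a b) := by
    apply Real.continuous_sqrt.comp_continuousOn
    exact (continuousOn_const.div continuousOn_id
      (fun y hy => ne_of_gt (lt_of_lt_of_le hapos hy.1))).sub continuousOn_const
  have hPc : Continuous P := by
    apply Continuous.mul continuous_const
    exact continuous_finset_sum _ fun k _ => Continuous.mul continuous_const
      (((continuous_pow _).div_const _).add (((continuous_pow _).mul continuous_const).div_const _))
  have hFcont : ContinuousOn (fun y => P (s y)) (Set.Icc a b) :=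
    hPc.comp_continuousOn hscont
  -- integrability
  have hint : IntegrableOn f (Set.Ioc a b) := intervalIntegral.integrableOn_deriv_of_nonneg hFcont hderiv hnn
  have hii : IntervalIntegrable f volume a b := by
    rw [intervalIntegrable_iff_integrableOn_Ioc_of_le hab.le]
    exact hint
  -- FTC
  have heq : ∫ y in a..b, f y = P (s b) - P (s a) :=
    intervalIntegral.integral_eq_sub_of_hasDeriv_right_of_le hab.le hFcont
      (fun y hy => (hderiv y hy).hasDerivWithinAt) hii
  have hsb : s b = 0 := by
    rw [hs]; simp only
    rw [hηb]; simp
  have hsa : s a = D/2 := by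
    rw [hs]; simp only
    rw [hηa]
    rw [show d^2 + D^2/4 - d^2 = (D/2)^2 by ring, Real.sqrt_sq (by positivity)]
  have hP0 : P 0 = 0 := by
    rw [hP]; simp only
    rw [Finset.sum_eq_zero, mul_zero]
    intro k _
    rw [zero_pow (by omega), zero_pow (by omega)]
    simp
  calc ∫ y in Set.Icc a b, f y = ∫ y in a..b, f y := by
        rw [MeasureTheory.integral_Icc_eq_integral_Ioc, intervalIntegral.integral_of_le hab.le]
    _ = P (s b) - P (s a) := heq
    _ = - P (D/2) := by rw [hsb, hsa, hP0]; ring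
    _ = ((M : ℝ) / η) * ((M-1).choose (m-1) : ℝ) * (2/D)^(M-m+1) *
          ∑ k ∈ Finset.range m,
            ((m-1).choose k : ℝ) * (-(2/D))^k *
              ((D/2)^(M-m+k+3) / ((M-m+k+3 : ℕ) : ℝ)
                + (D/2)^(M-m+k+1) * d^2 / ((M-m+k+1 : ℕ) : ℝ)) := by
        rw [hP]; simp only
        rw [hc, pow_succ]
        ring
end

section
/- Let Y_1 ≤ Y_2 be the order statistics of two i.i.d. copies of Y with density f_Y(y) = η/(D y^2 sqrt(η/y - d^2)) on [a, b], where a = η/(d^2 + D^2/4), b = η/d^2. Then E[log2(1 + ρ*Y_1)] = -(4η/(D^2 ln 2)) * (G(b) - G(a)), where G(x) = ln(1 + ρx)/x - ρ ln x + ρ ln(1 + ρx), for any ρ > 0. -/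
open MeasureTheory Set
open scoped ENNReal NNReal

lemma key_lemma (a b : ℝ) (hab : a ≤ b) (f H : ℝ → ℝ)
    (hf0 : ∀ y, y ∉ Set.Icc a b → f y = 0)
    (hHc : ContinuousOn H (Set.Icc a b))
    (hHd : ∀ y ∈ Set.Ioo a b, HasDerivAt H (f y) y)
    (hfnn : ∀ y ∈ Set.Ioo a b, 0 ≤ f y) :
    Integrable f ∧ (∀ t, ∫ s in Set.Iic t, f s = H (max a (min t b)) - H a)
      ∧ ∫ s, f s = H b - H a := by
  have hI : IntegrableOn f (Set.Ioc a b) :=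
    intervalIntegral.integrableOn_deriv_of_nonneg hHc hHd hfnn
  have hae : f =ᵐ[volume] (Set.Ioc a b).indicator f := by
    have hne : ∀ᵐ y : ℝ ∂volume, y ≠ a := by
      rw [ae_iff]
      simpa using measure_singleton (α := ℝ) a
    filter_upwards [hne] with y hy
    by_cases h : y ∈ Set.Ioc a b
    · simp [Set.indicator_of_mem h]
    · rw [Set.indicator_of_notMem h, hf0]
      intro hmem
      rcases hmem with ⟨h1, h2⟩
      exact h ⟨lt_of_le_of_ne h1 (Ne.symm hy), h2⟩
  have hint : Integrable f := by
    refine (hI.integrable_indicator measurableSet_Ioc).congr hae.symm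
  -- FTC on subintervals
  have hftc : ∀ c, a ≤ c → c ≤ b → ∫ s in Set.Ioc a c, f s = H c - H a := by
    intro c hac hcb
    have hsub : Set.Ioc a c ⊆ Set.Ioc a b := Set.Ioc_subset_Ioc le_rfl hcb
    have hII : IntervalIntegrable f volume a c := by
      rw [intervalIntegrable_iff_integrableOn_Ioc_of_le hac]
      exact hI.mono_set hsub
    have := intervalIntegral.integral_eq_sub_of_hasDeriv_right_of_le hac
      (hHc.mono (Set.Icc_subset_Icc le_rfl hcb))
      (fun x hx => ((hHd x ⟨hx.1, lt_of_lt_of_le hx.2 hcb⟩).hasDerivWithinAt)) hII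
    rwa [intervalIntegral.integral_of_le hac] at this
  refine ⟨hint, ?_, ?_⟩
  · intro t
    have h1 : ∫ s in Set.Iic t, f s = ∫ s in Set.Iic t ∩ Set.Ioc a b, f s := by
      rw [← setIntegral_indicator measurableSet_Ioc]
      exact integral_congr_ae (ae_restrict_of_ae hae)
    have h2 : Set.Iic t ∩ Set.Ioc a b = Set.Ioc a (min t b) := by
      ext x
      simp only [Set.mem_inter_iff, Set.mem_Iic, Set.mem_Ioc, le_min_iff]
      constructor
      · rintro ⟨h1, h2, h3⟩; exact ⟨h2, h1, h3⟩
      · rintro ⟨h1, h2, h3⟩; exact ⟨h2, h1, h3⟩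
    rw [h1, h2]
    by_cases hta : a ≤ t
    · have : max a (min t b) = min t b := max_eq_right (le_min hta hab)
      rw [this]
      exact hftc _ (le_min hta hab) (min_le_right _ _)
    · push_neg at hta
      have he : Set.Ioc a (min t b) = ∅ := by
        apply Set.Ioc_eq_empty
        exact fun h => absurd (lt_of_lt_of_le h (min_le_left _ _)) (not_lt.2 hta.le)
      have hm : max a (min t b) = a := max_eq_left ((min_le_left t b).trans hta.le)
      rw [he, hm]
      simp
  · rw [integral_congr_ae hae, integral_indicator measurableSet_Ioc]
    exact hftc b hab le_rfl

set_option maxHeartbeats 1000000 in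
/-- Ergodic rate of the weaker user in two-user uplink NOMA:
`E[log₂(1 + ρ Y₁)]` where `Y₁` is the minimum of two i.i.d. channel gains. -/
theorem stmt_15 (D d η ρ : ℝ) (hD : 0 < D) (hd : 0 < d) (hη : 0 < η)
    (hρ : 0 < ρ)
    (a b : ℝ) (ha : a = η / (d^2 + D^2/4)) (hb : b = η / d^2)
    {Ω : Type*} [MeasurableSpace Ω] (μ : Measure Ω) [IsProbabilityMeasure μ]
    (Y₁ Y₂ : Ω → ℝ) (hY₁ : Measurable Y₁) (hY₂ : Measurable Y₂)
    (hindep : ProbabilityTheory.IndepFun Y₁ Y₂ μ)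
    (fY : ℝ → ℝ)
    (hfY : ∀ y, fY y = if a ≤ y ∧ y ≤ b
      then η / (D * y^2 * Real.sqrt (η / y - d^2)) else 0)
    (hcdf₁ : ∀ t : ℝ, (μ {ω | Y₁ ω ≤ t}).toReal = ∫ s in Set.Iic t, fY s)
    (hcdf₂ : ∀ t : ℝ, (μ {ω | Y₂ ω ≤ t}).toReal = ∫ s in Set.Iic t, fY s)
    (G : ℝ → ℝ)
    (hG : ∀ x, G x = Real.log (1 + ρ*x) / x - ρ * Real.log x
      + ρ * Real.log (1 + ρ*x)) :
    ∫ ω, Real.logb 2 (1 + ρ * min (Y₁ ω) (Y₂ ω)) ∂μ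
      = -(4*η / (D^2 * Real.log 2)) * (G b - G a) := by
  have hD2 : (0:ℝ) < D^2 := by positivity
  have hlog2 : (0:ℝ) < Real.log 2 := Real.log_pos (by norm_num)
  have ha0 : 0 < a := by rw [ha]; positivity
  have hb0 : 0 < b := by rw [hb]; positivity
  have hab : a ≤ b := by
    rw [ha, hb]
    gcongr
    nlinarith [sq_nonneg D]
  have hηa : η / a = d^2 + D^2/4 := by
    rw [ha]; field_simp
  have hηb : η / b = d^2 := by
    rw [hb]; field_simp
  -- positivity facts on the interval
  have hy0 : ∀ y ∈ Set.Icc a b, 0 < y := fun y hy => lt_of_lt_of_le ha0 hy.1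
  have hunn : ∀ y ∈ Set.Icc a b, 0 ≤ η / y - d^2 := by
    intro y hy
    have h1 : η / b ≤ η / y := by
      rw [div_le_div_iff₀ hb0 (hy0 y hy)]
      nlinarith [hy.2]
    rw [hηb] at h1; linarith
  have hupos : ∀ y ∈ Set.Ioo a b, 0 < η / y - d^2 := by
    intro y hy
    have hy0' : 0 < y := ha0.trans hy.1
    have h1 : η / b < η / y := by
      rw [div_lt_div_iff₀ hb0 hy0']
      nlinarith [hy.2]
    rw [hηb] at h1; linarith
  -- the CDF antiderivative
  set Φ : ℝ → ℝ := fun y => 1 - 2/D * Real.sqrt (η / y - d^2) with hΦdef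
  have hΦa : Φ a = 0 := by
    have h1 : η / a - d^2 = (D/2)^2 := by rw [hηa]; ring
    simp only [hΦdef, h1, Real.sqrt_sq (by positivity : (0:ℝ) ≤ D/2)]
    field_simp
    simp
  have hucont : ContinuousOn (fun y : ℝ => η / y - d^2) (Set.Icc a b) :=
    (continuousOn_const.div continuousOn_id fun y hy => (hy0 y hy).ne').sub continuousOn_const
  have hΦc : ContinuousOn Φ (Set.Icc a b) :=
    continuousOn_const.sub (continuousOn_const.mul
      (Real.continuous_sqrt.comp_continuousOn hucont))
  have huderiv : ∀ y ∈ Set.Ioo a b, HasDerivAt (fun y : ℝ => η / y - d^2) (-(η / y^2)) y := by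
    intro y hy
    have hy0' : 0 < y := ha0.trans hy.1
    have h2 := ((hasDerivAt_inv hy0'.ne').const_mul η).sub_const (d^2)
    simpa [div_eq_mul_inv, mul_neg] using h2
  have hΦd : ∀ y ∈ Set.Ioo a b, HasDerivAt Φ (fY y) y := by
    intro y hy
    have hy0' : 0 < y := ha0.trans hy.1
    have hup := hupos y hy
    have hsq : 0 < Real.sqrt (η / y - d^2) := Real.sqrt_pos.2 hup
    have hs := (Real.hasDerivAt_sqrt hup.ne').comp y (huderiv y hy)
    have hd2' := (hs.const_mul (2/D)).const_sub 1
    refine hd2'.congr_deriv (Eq.symm ?_)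
    rw [hfY, if_pos ⟨hy.1.le, hy.2.le⟩]
    field_simp
  have hfYnn : ∀ y ∈ Set.Ioo a b, 0 ≤ fY y := by
    intro y hy
    rw [hfY, if_pos ⟨hy.1.le, hy.2.le⟩]
    have := Real.sqrt_nonneg (η / y - d^2)
    have hy0' : 0 < y := ha0.trans hy.1
    positivity
  have hfY0 : ∀ y, y ∉ Set.Icc a b → fY y = 0 := by
    intro y hy
    rw [hfY, if_neg]
    simpa [Set.mem_Icc] using hy
  obtain ⟨-, hfYIic, -⟩ := key_lemma a b hab fY Φ hfY0 hΦc hΦd hfYnn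
  -- density of the minimum
  set f₁ : ℝ → ℝ := fun y => if a ≤ y ∧ y ≤ b then 4*η/(D^2*y^2) else 0 with hf₁def
  have hf₁eval : ∀ y, f₁ y = if a ≤ y ∧ y ≤ b then 4*η/(D^2*y^2) else 0 := fun y => rfl
  set Ψ : ℝ → ℝ := fun y => 1 - 4/D^2 * (η / y - d^2) with hΨdef
  have hΨa : Ψ a = 0 := by simp only [hΨdef, hηa]; field_simp; ring
  have hΨc : ContinuousOn Ψ (Set.Icc a b) :=
    continuousOn_const.sub (continuousOn_const.mul hucont)
  have hΨd : ∀ y ∈ Set.Ioo a b, HasDerivAt Ψ (f₁ y) y := by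
    intro y hy
    have hy0' : 0 < y := ha0.trans hy.1
    have h2 := ((huderiv y hy).const_mul (4/D^2)).const_sub 1
    refine h2.congr_deriv (Eq.symm ?_)
    rw [hf₁eval, if_pos (show a ≤ y ∧ y ≤ b from ⟨hy.1.le, hy.2.le⟩)]
    field_simp
  have hf₁nn : ∀ y, 0 ≤ f₁ y := by
    intro y
    rw [hf₁eval]
    split
    · positivity
    · exact le_rfl
  have hf₁0 : ∀ y, y ∉ Set.Icc a b → f₁ y = 0 := by
    intro y hy
    rw [hf₁eval, if_neg]
    simpa [Set.mem_Icc] using hy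
  obtain ⟨hf₁int, hf₁Iic, -⟩ := key_lemma a b hab f₁ Ψ hf₁0 hΨc hΨd (fun y _ => hf₁nn y)
  -- CDF formulas
  have hcdfΦ : ∀ t, (∫ s in Set.Iic t, fY s) = Φ (max a (min t b)) := by
    intro t; rw [hfYIic t, hΦa, sub_zero]
  have toReal_compl : ∀ (S : Set Ω), MeasurableSet S → (μ Sᶜ).toReal = 1 - (μ S).toReal := by
    intro S hSm
    rw [prob_compl_eq_one_sub hSm,
      ENNReal.toReal_sub_of_le prob_le_one ENNReal.one_ne_top, ENNReal.toReal_one]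
  have hIoi : ∀ (Y : Ω → ℝ) (t : ℝ), Measurable Y →
      (∀ t, (μ {ω | Y ω ≤ t}).toReal = ∫ s in Set.Iic t, fY s) →
      (μ (Y ⁻¹' Set.Ioi t)).toReal = 1 - Φ (max a (min t b)) := by
    intro Y t hY hc
    have hset : Y ⁻¹' Set.Ioi t = {ω | Y ω ≤ t}ᶜ := by
      ext ω; simp [not_le]
    rw [hset, toReal_compl {ω | Y ω ≤ t} (hY measurableSet_Iic), hc t, hcdfΦ]
  set M : Ω → ℝ := fun ω => min (Y₁ ω) (Y₂ ω) with hMdef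
  have hMm : Measurable M := hY₁.min hY₂
  have hminle : ∀ t, (μ {ω | M ω ≤ t}).toReal = ∫ s in Set.Iic t, f₁ s := by
    intro t
    have hcmem : max a (min t b) ∈ Set.Icc a b :=
      ⟨le_max_left _ _, max_le hab (min_le_right _ _)⟩
    have hS : {ω | M ω ≤ t} = (Y₁ ⁻¹' Set.Ioi t ∩ Y₂ ⁻¹' Set.Ioi t)ᶜ := by
      ext ω
      simp only [hMdef, Set.mem_setOf_eq, Set.mem_compl_iff, Set.mem_inter_iff,
        Set.mem_preimage, Set.mem_Ioi, min_le_iff, not_and_or, not_lt]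
    rw [hS, toReal_compl _ ((hY₁ measurableSet_Ioi).inter (hY₂ measurableSet_Ioi)),
      hindep.measure_inter_preimage_eq_mul _ _ measurableSet_Ioi measurableSet_Ioi,
      ENNReal.toReal_mul, hIoi Y₁ t hY₁ hcdf₁, hIoi Y₂ t hY₂ hcdf₂,
      hf₁Iic t, hΨa, sub_zero]
    set c := max a (min t b) with hcdef
    have hsq := Real.mul_self_sqrt (hunn c hcmem)
    simp only [hΦdef, hΨdef]
    have hDne : D ≠ 0 := hD.ne'
    linear_combination (-4/D^2) * hsq
  -- the integrand times density, with antiderivative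
  have haux : Measurable fun y : ℝ => 1 + ρ * y := by fun_prop
  have hgm : Measurable fun y : ℝ => Real.logb 2 (1 + ρ*y) :=
    (Real.measurable_log.div_const (Real.log 2)).comp haux
  set F2 : ℝ → ℝ := fun y => f₁ y * Real.logb 2 (1 + ρ*y) with hF2def
  set H₂ : ℝ → ℝ := fun y => -(4*η/(D^2*Real.log 2)) *
    (Real.log (1 + ρ*y) / y - ρ * Real.log y + ρ * Real.log (1 + ρ*y)) with hH₂def
  have h1ρ : ∀ y ∈ Set.Icc a b, (0:ℝ) < 1 + ρ*y := fun y hy => by nlinarith [hy0 y hy]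
  have hH₂c : ContinuousOn H₂ (Set.Icc a b) := by
    apply continuousOn_const.mul
    have l1 : ContinuousOn (fun y : ℝ => Real.log (1 + ρ*y)) (Set.Icc a b) :=
      (continuousOn_const.add (continuousOn_const.mul continuousOn_id)).log
        (fun y hy => (h1ρ y hy).ne')
    have l2 : ContinuousOn (fun y : ℝ => Real.log y) (Set.Icc a b) :=
      continuousOn_id.log (fun y hy => (hy0 y hy).ne')
    exact ((l1.div continuousOn_id fun y hy => (hy0 y hy).ne').sub
      (continuousOn_const.mul l2)).add (continuousOn_const.mul l1)
  have hF20 : ∀ y, y ∉ Set.Icc a b → F2 y = 0 := by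
    intro y hy
    simp only [hF2def]
    rw [hf₁0 y hy, zero_mul]
  have hF2nn : ∀ y ∈ Set.Ioo a b, 0 ≤ F2 y := by
    intro y hy
    apply mul_nonneg (hf₁nn y)
    apply Real.logb_nonneg (by norm_num)
    nlinarith [ha0.trans hy.1]
  have hH₂d : ∀ y ∈ Set.Ioo a b, HasDerivAt H₂ (F2 y) y := by
    intro x hx
    have hx0 : 0 < x := ha0.trans hx.1
    have h1x : (0:ℝ) < 1 + ρ*x := by nlinarith
    have hA : HasDerivAt (fun x : ℝ => 1 + ρ*x) ρ x := by
      simpa using ((hasDerivAt_id x).const_mul ρ).const_add 1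
    have hlog1 : HasDerivAt (fun x : ℝ => Real.log (1+ρ*x)) (ρ/(1+ρ*x)) x := hA.log h1x.ne'
    have hdiv := hlog1.div (hasDerivAt_id x) hx0.ne'
    have hlogx := Real.hasDerivAt_log hx0.ne'
    have hGd := (hdiv.sub (hlogx.const_mul ρ)).add (hlog1.const_mul ρ)
    have hfin := hGd.const_mul (-(4*η/(D^2*Real.log 2)))
    refine hfin.congr_deriv (Eq.symm ?_)
    simp only [hF2def, Real.logb]
    rw [hf₁eval, if_pos (show a ≤ x ∧ x ≤ b from ⟨hx.1.le, hx.2.le⟩)]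
    simp only [id]
    field_simp
    ring
  obtain ⟨-, -, hF2tot⟩ := key_lemma a b hab F2 H₂ hF20 hH₂c hH₂d hF2nn
  -- measure identification
  have hf₁m : Measurable f₁ := by
    rw [show f₁ = fun y => if a ≤ y ∧ y ≤ b then 4*η/(D^2*y^2) else 0 from rfl]
    exact Measurable.ite measurableSet_Icc
      (measurable_const.div ((measurable_id'.pow_const 2).const_mul (D^2)))
      measurable_const
  set ν' : Measure ℝ := volume.withDensity (fun y => ENNReal.ofReal (f₁ y)) with hν'def
  have hν'Iic : ∀ t, ν' (Set.Iic t) = ENNReal.ofReal (∫ s in Set.Iic t, f₁ s) := by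
    intro t
    rw [hν'def, withDensity_apply _ measurableSet_Iic,
      ← ofReal_integral_eq_lintegral_ofReal hf₁int.restrict
        (Filter.Eventually.of_forall hf₁nn)]
  haveI : IsFiniteMeasure ν' := by
    constructor
    rw [hν'def, withDensity_apply _ MeasurableSet.univ, Measure.restrict_univ,
      ← ofReal_integral_eq_lintegral_ofReal hf₁int (Filter.Eventually.of_forall hf₁nn)]
    exact ENNReal.ofReal_lt_top
  have hmap : Measure.map M μ = ν' := by
    haveI := Measure.isProbabilityMeasure_map (μ := μ) hMm.aemeasurable
    refine Measure.ext_of_Iic (Measure.map M μ) ν' (fun t => ?_)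
    rw [Measure.map_apply hMm measurableSet_Iic, hν'Iic]
    have hset : M ⁻¹' Set.Iic t = {ω | M ω ≤ t} := rfl
    rw [hset, ← hminle t, ENNReal.ofReal_toReal (measure_ne_top μ _)]
  -- final computation
  have hmain : ∫ ω, Real.logb 2 (1 + ρ * min (Y₁ ω) (Y₂ ω)) ∂μ = ∫ s, F2 s := by
    have h1 : ∫ ω, Real.logb 2 (1 + ρ * min (Y₁ ω) (Y₂ ω)) ∂μ
        = ∫ y, Real.logb 2 (1 + ρ*y) ∂(Measure.map M μ) :=
      (integral_map hMm.aemeasurable hgm.aestronglyMeasurable).symm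
    rw [h1, hmap, hν'def]
    have h2 := integral_withDensity_eq_integral_smul (μ := volume)
      (f := fun y => (f₁ y).toNNReal) (measurable_real_toNNReal.comp hf₁m)
      (fun y => Real.logb 2 (1 + ρ*y))
    rw [show (fun y => ENNReal.ofReal (f₁ y)) = (fun y => ((f₁ y).toNNReal : ℝ≥0∞)) from rfl]
    rw [h2]
    apply integral_congr_ae
    apply Filter.Eventually.of_forall
    intro y
    simp only [hF2def, NNReal.smul_def, smul_eq_mul, Real.coe_toNNReal _ (hf₁nn y)]
  rw [hmain, hF2tot]
  simp only [hH₂def, hG b, hG a]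
  ring
end

section
/- With G(x) = ln(1 + ρx)/x - ρ ln x + ρ ln(1 + ρx) and constants 0 < a < b, as ρ → ∞: G(b) - G(a) = (1/b - 1/a) ln ρ + (ln b)/b - (ln a)/a + 1/b - 1/a + o(1). Consequently, E[log2(1+ρY_1)] = -(4η/(D^2 ln 2))(G(b)-G(a)) satisfies lim_{ρ→∞} E[log2(1+ρY_1)]/log2(ρ) = (4η/D^2)(1/a - 1/b). -/
open Filter

/-- High-SNR expansion of `G(b) - G(a)` and the resulting high-SNR slope of
the weak user's ergodic rate in two-user uplink NOMA. -/
theorem stmt_16 (a b η D : ℝ) (ha : 0 < a) (hab : a < b)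
    (hη : 0 < η) (hD : 0 < D)
    (G : ℝ → ℝ → ℝ)
    (hG : ∀ ρ x, G ρ x = Real.log (1 + ρ*x) / x - ρ * Real.log x
      + ρ * Real.log (1 + ρ*x)) :
    Tendsto (fun ρ : ℝ => G ρ b - G ρ a
        - ((1/b - 1/a) * Real.log ρ
          + Real.log b / b - Real.log a / a + 1/b - 1/a))
      atTop (nhds 0) ∧
    Tendsto (fun ρ : ℝ =>
        (-(4*η / (D^2 * Real.log 2)) * (G ρ b - G ρ a)) / Real.logb 2 ρ)
      atTop (nhds ((4*η / D^2) * (1/a - 1/b))) := by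
  have hb : 0 < b := ha.trans hab
  -- key limit: ρ * log (1 + 1/(ρ*c)) → 1/c
  have key : ∀ c : ℝ, 0 < c →
      Tendsto (fun ρ : ℝ => ρ * Real.log (1 + 1/(ρ*c))) atTop (nhds (1/c)) := by
    intro c hc
    refine (Real.tendsto_mul_log_one_add_div_atTop (1/c)).congr (fun ρ => ?_)
    rw [div_div, mul_comm c ρ]
  -- small limit: log (1 + 1/(ρ*c)) → 0
  have small : ∀ c : ℝ, 0 < c →
      Tendsto (fun ρ : ℝ => Real.log (1 + 1/(ρ*c))) atTop (nhds 0) := by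
    intro c hc
    have h1 : Tendsto (fun ρ : ℝ => 1 + 1/(ρ*c)) atTop (nhds 1) := by
      have : Tendsto (fun ρ : ℝ => ρ * c) atTop atTop :=
        Tendsto.atTop_mul_const hc tendsto_id
      simpa using tendsto_const_nhds.add this.inv_tendsto_atTop
    have := (Real.continuousAt_log (by norm_num : (1:ℝ) ≠ 0)).tendsto.comp h1
    simpa [Function.comp_def] using this
  -- positivity for eventual algebraic identity
  have heq : ∀ᶠ ρ : ℝ in atTop,
      G ρ b - G ρ a
        - ((1/b - 1/a) * Real.log ρ
          + Real.log b / b - Real.log a / a + 1/b - 1/a)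
      = Real.log (1 + 1/(ρ*b)) / b - Real.log (1 + 1/(ρ*a)) / a
        + ρ * Real.log (1 + 1/(ρ*b)) - ρ * Real.log (1 + 1/(ρ*a))
        - (1/b - 1/a) := by
    filter_upwards [eventually_gt_atTop (0:ℝ)] with ρ hρ
    have hlog : ∀ x : ℝ, 0 < x →
        Real.log (1 + ρ*x) = Real.log ρ + Real.log x + Real.log (1 + 1/(ρ*x)) := by
      intro x hx
      have hρx : 0 < ρ * x := mul_pos hρ hx
      have h1 : (1:ℝ) + ρ*x = ρ * x * (1 + 1/(ρ*x)) := by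
        field_simp
        ring
      rw [h1, Real.log_mul (by positivity) (by positivity),
        Real.log_mul hρ.ne' hx.ne']
    rw [hG ρ b, hG ρ a, hlog b hb, hlog a ha]
    ring
  have part1 : Tendsto (fun ρ : ℝ => G ρ b - G ρ a
        - ((1/b - 1/a) * Real.log ρ
          + Real.log b / b - Real.log a / a + 1/b - 1/a))
      atTop (nhds 0) := by
    have hE : Tendsto (fun ρ : ℝ =>
        Real.log (1 + 1/(ρ*b)) / b - Real.log (1 + 1/(ρ*a)) / a
        + ρ * Real.log (1 + 1/(ρ*b)) - ρ * Real.log (1 + 1/(ρ*a))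
        - (1/b - 1/a)) atTop (nhds (0/b - 0/a + 1/b - 1/a - (1/b - 1/a))) :=
      (((((small b hb).div_const b).sub ((small a ha).div_const a)).add
        (key b hb)).sub (key a ha)).sub tendsto_const_nhds
    have : (0/b - 0/a + 1/b - 1/a - (1/b - 1/a) : ℝ) = 0 := by ring
    rw [this] at hE
    exact hE.congr' (heq.mono fun ρ h => h.symm)
  refine ⟨part1, ?_⟩
  -- slope of main part
  have hL : Tendsto Real.log atTop atTop := Real.tendsto_log_atTop
  have hslope : Tendsto (fun ρ : ℝ => (G ρ b - G ρ a) / Real.log ρ)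
      atTop (nhds (1/b - 1/a)) := by
    have h1 : Tendsto (fun ρ : ℝ => (G ρ b - G ρ a
        - ((1/b - 1/a) * Real.log ρ
          + Real.log b / b - Real.log a / a + 1/b - 1/a)) / Real.log ρ)
        atTop (nhds 0) := part1.div_atTop hL
    have h2 : Tendsto (fun ρ : ℝ => ((1/b - 1/a) * Real.log ρ
          + Real.log b / b - Real.log a / a + 1/b - 1/a) / Real.log ρ)
        atTop (nhds (1/b - 1/a)) := by
      have hc : Tendsto (fun ρ : ℝ =>
          (Real.log b / b - Real.log a / a + 1/b - 1/a) / Real.log ρ)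
          atTop (nhds 0) := tendsto_const_nhds.div_atTop hL
      have := (tendsto_const_nhds (x := (1/b - 1/a : ℝ)) (f := atTop)).add hc
      rw [add_zero] at this
      refine this.congr' ?_
      filter_upwards [hL.eventually_ne_atTop 0] with ρ hρ
      field_simp
      ring
    have := h1.add h2
    rw [zero_add] at this
    refine this.congr (fun ρ => ?_)
    rw [← add_div]
    ring_nf
  -- convert to the stated form
  have hln2 : Real.log 2 ≠ 0 := by
    exact ne_of_gt (Real.log_pos (by norm_num))
  have hfinal := hslope.const_mul (-(4*η / (D^2 * Real.log 2)) * Real.log 2)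
  have hval : (-(4*η / (D^2 * Real.log 2)) * Real.log 2) * (1/b - 1/a)
      = (4*η / D^2) * (1/a - 1/b) := by
    field_simp
    ring
  rw [hval] at hfinal
  refine hfinal.congr (fun ρ => ?_)
  rw [Real.logb, div_div_eq_mul_div]
  ring
end

section
/- For the two-user uplink NOMA system with i.i.d. channel gains Y', Y'' supported on [a, b] (a = η/(d^2+D^2/4), b = η/d^2, CDF F_Y(y) = 1 - (2/D)sqrt(η/y - d^2)), unit transmit powers, SNR ρ, and target rate R̃_2 for the first-decoded (stronger) user: if 0 < R̃_2 < 1 then both users' outage probabilities are exactly 0 for all ρ ≥ (2^{R̃_2} - 1)/(a*(2 - 2^{R̃_2})). -/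
open MeasureTheory

/-- Two-user uplink NOMA, target rate `R₂ ∈ (0,1)`: for every
`ρ ≥ (2^{R₂} - 1)/(a (2 - 2^{R₂}))` both users' outage probabilities are
exactly zero. -/
theorem stmt_17 (D d η ρ R₂ : ℝ) (hD : 0 < D) (hd : 0 < d) (hη : 0 < η)
    (hρ : 0 < ρ) (hR₂0 : 0 < R₂) (hR₂1 : R₂ < 1)
    (a b : ℝ) (ha : a = η / (d^2 + D^2/4)) (hb : b = η / d^2)
    {Ω : Type*} [MeasurableSpace Ω] (μ : Measure Ω) [IsProbabilityMeasure μ]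
    (Y' Y'' : Ω → ℝ) (hY' : Measurable Y') (hY'' : Measurable Y'')
    (hindep : ProbabilityTheory.IndepFun Y' Y'' μ)
    (hsupp' : ∀ ω, Y' ω ∈ Set.Icc a b)
    (hsupp'' : ∀ ω, Y'' ω ∈ Set.Icc a b)
    (hcdf' : ∀ t ∈ Set.Icc a b,
      (μ {ω | Y' ω ≤ t}).toReal = 1 - (2/D) * Real.sqrt (η / t - d^2))
    (hcdf'' : ∀ t ∈ Set.Icc a b,
      (μ {ω | Y'' ω ≤ t}).toReal = 1 - (2/D) * Real.sqrt (η / t - d^2))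
    (hρbig : ((2:ℝ)^R₂ - 1) / (a * (2 - (2:ℝ)^R₂)) ≤ ρ) :
    μ {ω | Real.logb 2 (1 + max (Y' ω) (Y'' ω) / (min (Y' ω) (Y'' ω) + 1/ρ)) < R₂}
      = 0 ∧
    μ {ω | ¬ (R₂ ≤ Real.logb 2 (1 + ρ * min (Y' ω) (Y'' ω)) ∧
        R₂ ≤ Real.logb 2 (1 + max (Y' ω) (Y'' ω) / (min (Y' ω) (Y'' ω) + 1/ρ)))}
      = 0 := by
  have hc1 : (1:ℝ) < 2 ^ R₂ :=
    (Real.one_lt_rpow_iff_of_pos (by norm_num)).mpr (Or.inl ⟨by norm_num, hR₂0⟩)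
  have hc2 : (2:ℝ) ^ R₂ < 2 := by
    calc (2:ℝ)^R₂ < 2^(1:ℝ) := by
          exact (Real.rpow_lt_rpow_left_iff (by norm_num)).mpr hR₂1
    _ = 2 := Real.rpow_one 2
  set c := (2:ℝ)^R₂ with hcdef
  have ha0 : 0 < a := by rw [ha]; positivity
  have hkey : c - 1 ≤ ρ * (a * (2 - c)) := by
    have h2c : 0 < a * (2 - c) := by nlinarith
    rw [div_le_iff₀ h2c] at hρbig
    nlinarith [hρbig]
  have main : ∀ ω, R₂ ≤ Real.logb 2 (1 + ρ * min (Y' ω) (Y'' ω)) ∧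
      R₂ ≤ Real.logb 2 (1 + max (Y' ω) (Y'' ω) / (min (Y' ω) (Y'' ω) + 1/ρ)) := by
    intro ω
    set m := min (Y' ω) (Y'' ω) with hm
    set M := max (Y' ω) (Y'' ω) with hM
    have hma : a ≤ m := le_min (hsupp' ω).1 (hsupp'' ω).1
    have hmM : m ≤ M := min_le_max
    have hm0 : 0 < m := lt_of_lt_of_le ha0 hma
    constructor
    · rw [Real.le_logb_iff_rpow_le (by norm_num) (by positivity)]
      have h1 : c - 1 ≤ ρ * m := by
        nlinarith [mul_nonneg (mul_nonneg hρ.le (sub_nonneg.mpr hma)) (by linarith : (0:ℝ) ≤ 2 - c),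
          mul_nonneg (mul_pos hρ hm0).le (by linarith : (0:ℝ) ≤ c - 1)]
      linarith
    · have hden : 0 < m + 1/ρ := by positivity
      have hM0 : 0 < M := lt_of_lt_of_le hm0 hmM
      have hquot : 0 ≤ M / (m + 1/ρ) := div_nonneg hM0.le hden.le
      rw [Real.le_logb_iff_rpow_le (by norm_num) (by linarith)]
      have h2 : c - 1 ≤ ρ * (m * (2 - c)) := by nlinarith
      have hinv : (c - 1) / ρ ≤ m * (2 - c) := by
        rw [div_le_iff₀ hρ]; nlinarith
      have h3 : (c - 1) * (m + 1/ρ) ≤ M := by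
        have : (c - 1) * (m + 1/ρ) ≤ m := by
          have : (c-1) * (1/ρ) = (c-1)/ρ := by ring
          nlinarith [hinv]
        linarith
      have h4 : c - 1 ≤ M / (m + 1/ρ) := (le_div_iff₀ hden).mpr h3
      linarith
  constructor
  · have hempty : {ω | Real.logb 2 (1 + max (Y' ω) (Y'' ω) / (min (Y' ω) (Y'' ω) + 1/ρ)) < R₂} = ∅ :=
      Set.eq_empty_iff_forall_notMem.mpr fun ω h => absurd (main ω).2 (not_le.mpr h)
    rw [hempty]; simp
  · have hempty : {ω | ¬ (R₂ ≤ Real.logb 2 (1 + ρ * min (Y' ω) (Y'' ω)) ∧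
        R₂ ≤ Real.logb 2 (1 + max (Y' ω) (Y'' ω) / (min (Y' ω) (Y'' ω) + 1/ρ)))} = ∅ :=
      Set.eq_empty_iff_forall_notMem.mpr fun ω h => h (main ω)
    rw [hempty]; simp
end

section
/- Consider the inner integral Ξ2(y1) = ∫_{y1}^{b} ln(1 + y2/(y1 + 1/ρ)) dF_Y(y2), with F_Y(y) = 1 - (2/D)sqrt(η/y - d^2) on [a,b], a = η/(d^2+D^2/4), b = η/d^2. Then Ξ2(y1) = (2/D) ln(1 + y1/(y1 + 1/ρ)) sqrt(η/y1 - d^2) + (4/D) sqrt(η/(y1 + 1/ρ) + d^2) arctan( sqrt(η/y1 - d^2) / sqrt(η/(y1 + 1/ρ) + d^2) ) - (4d/D) arctan( sqrt(η/y1 - d^2) / d ). -/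
open Real intervalIntegral MeasureTheory Set

private lemma stmt_19_alg (D d η c y S K L : ℝ) (hD : 0 < D) (hd : 0 < d) (hc : 0 < c)
    (hy : 0 < y) (hS : 0 < S) (hK : 0 < K)
    (hS2 : S^2 = η/y - d^2) (hK2 : K^2 = η/c + d^2) :
    L * (η / (D * y^2 * S)) =
      -(2/D) * ((1/c)/(1+y/c) * S + L * (-(η/y^2)/(2*S)))
      - 4/D*K * (1/(1+(S/K)^2) * (-(η/y^2)/(2*S)/K))
      + 4*d/D * (1/(1+(S/d)^2) * (-(η/y^2)/(2*S)/d)) := by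
  have e1 : 1 + (S/K)^2 = (K^2 + S^2)/K^2 := by field_simp
  have e2 : 1 + (S/d)^2 = (d^2 + S^2)/d^2 := by field_simp
  have e3 : d^2 + S^2 = η/y := by rw [hS2]; ring
  have e4 : K^2 + S^2 = η * (c+y)/(c*y) := by
    rw [hS2, hK2]; field_simp; ring
  have e5 : (1:ℝ) + y/c = (c+y)/c := by field_simp
  have hη : η = y * S^2 + y * d^2 := by
    have h := hS2; field_simp at h; linarith
  have hcy : 0 < c + y := by positivity
  have T2 : 1/(1+(S/K)^2) * (-(η/y^2)/(2*S)/K) = -(K*c)/(2*S*y*(c+y)) := by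
    rw [e1, e4]; rw [hη]; field_simp
  have T3 : 1/(1+(S/d)^2) * (-(η/y^2)/(2*S)/d) = -d/(2*S*y) := by
    rw [e2, e3]; rw [hη]; field_simp
  have hK2' : c * K^2 = η + c * d^2 := by
    rw [hK2]; field_simp; try ring
  have hS2' : y * S^2 = η - y * d^2 := by
    rw [hS2]; field_simp; try ring
  rw [T2, T3, e5]
  field_simp
  linear_combination (-4*y) * hK2' + (4*y) * hS2'

set_option maxHeartbeats 1000000 in
/-- Closed form of the inner integral `Ξ₂(y₁)` appearing in the ergodic rate
of the stronger user in two-user uplink NOMA. -/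
theorem stmt_19 (D d η ρ : ℝ) (hD : 0 < D) (hd : 0 < d) (hη : 0 < η)
    (hρ : 0 < ρ)
    (a b : ℝ) (ha : a = η / (d^2 + D^2/4)) (hb : b = η / d^2)
    (y₁ : ℝ) (hy₁ : y₁ ∈ Set.Icc a b) :
    ∫ y₂ in y₁..b,
        Real.log (1 + y₂ / (y₁ + 1/ρ)) * (η / (D * y₂^2 * Real.sqrt (η / y₂ - d^2)))
      = (2/D) * Real.log (1 + y₁ / (y₁ + 1/ρ)) * Real.sqrt (η / y₁ - d^2)
        + (4/D) * Real.sqrt (η / (y₁ + 1/ρ) + d^2) *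
            Real.arctan (Real.sqrt (η / y₁ - d^2) / Real.sqrt (η / (y₁ + 1/ρ) + d^2))
        - (4*d/D) * Real.arctan (Real.sqrt (η / y₁ - d^2) / d) := by
  obtain ⟨hay, hyb⟩ := hy₁
  have ha0 : 0 < a := by
    rw [ha]; positivity
  have hy0 : 0 < y₁ := ha0.trans_le hay
  have hb0 : 0 < b := hy0.trans_le hyb
  set c : ℝ := y₁ + 1/ρ with hc_def
  have hc : 0 < c := by positivity
  have hKsq : 0 < η / c + d^2 := by positivity
  set K : ℝ := Real.sqrt (η / c + d^2) with hK_def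
  have hK : 0 < K := Real.sqrt_pos.2 hKsq
  have hK2 : K^2 = η / c + d^2 := Real.sq_sqrt hKsq.le
  have hbη : η / b = d^2 := by
    rw [hb]; field_simp
  -- the antiderivative
  set g : ℝ → ℝ := fun y =>
    -(2/D) * Real.log (1 + y/c) * Real.sqrt (η / y - d^2)
      - (4/D) * K * Real.arctan (Real.sqrt (η / y - d^2) / K)
      + (4*d/D) * Real.arctan (Real.sqrt (η / y - d^2) / d) with hg_def
  set f : ℝ → ℝ := fun y₂ =>
    Real.log (1 + y₂ / c) * (η / (D * y₂^2 * Real.sqrt (η / y₂ - d^2))) with hf_def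
  have hsb : Real.sqrt (η / b - d^2) = 0 := by
    rw [hbη, sub_self, Real.sqrt_zero]
  -- positivity facts on the interval
  have hpos : ∀ y ∈ Set.Icc y₁ b, 0 < y ∧ 0 ≤ η / y - d^2 := by
    intro y hy
    have h1 : 0 < y := hy0.trans_le hy.1
    refine ⟨h1, ?_⟩
    have : η / b ≤ η / y := div_le_div_of_nonneg_left hη.le h1 hy.2
    rw [hbη] at this; linarith
  have hcont : ContinuousOn g (Set.Icc y₁ b) := by
    have hs : ContinuousOn (fun y => Real.sqrt (η / y - d^2)) (Set.Icc y₁ b) := by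
      apply ContinuousOn.sqrt
      exact (continuousOn_const.div continuousOn_id fun y hy => (hpos y hy).1.ne').sub
        continuousOn_const
    have hlog : ContinuousOn (fun y => Real.log (1 + y/c)) (Set.Icc y₁ b) := by
      apply ContinuousOn.log
      · exact continuousOn_const.add (continuousOn_id.div_const c)
      · intro y hy
        have h1 := (hpos y hy).1
        have : (0:ℝ) < 1 + y / c := by positivity
        exact this.ne'
    exact (((continuousOn_const.mul hlog).mul hs).sub
      (continuousOn_const.mul (Real.continuous_arctan.comp_continuousOn (hs.div_const K)))).add
      (continuousOn_const.mul (Real.continuous_arctan.comp_continuousOn (hs.div_const d)))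
  have hderiv : ∀ y ∈ Set.Ioo y₁ b, HasDerivAt g (f y) y := by
    intro y hy
    have hy0' : 0 < y := hy0.trans hy.1
    have hss : 0 < η / y - d^2 := by
      have h := div_lt_div_of_pos_left hη hy0' hy.2
      rw [hbη] at h; linarith
    have hS : 0 < Real.sqrt (η / y - d^2) := Real.sqrt_pos.2 hss
    set S := Real.sqrt (η / y - d^2) with hS_def
    have hS2 : S^2 = η / y - d^2 := Real.sq_sqrt hss.le
    have h1c : (0:ℝ) < 1 + y / c := by positivity
    have hu : HasDerivAt (fun x : ℝ => η / x - d^2) (-(η / y^2)) y := by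
      have h := ((hasDerivAt_inv hy0'.ne').const_mul η).sub_const (d^2)
      convert h using 1
      · rfl
      · rfl
      · funext x; rw [div_eq_mul_inv]
      rw [div_eq_mul_inv, mul_neg]
    have hsq : HasDerivAt (fun x => Real.sqrt (η / x - d^2)) (-(η / y^2) / (2 * S)) y :=
      hu.sqrt hss.ne'
    have hlog : HasDerivAt (fun x => Real.log (1 + x / c)) ((1/c) / (1 + y/c)) y := by
      have h : HasDerivAt (fun x : ℝ => 1 + x / c) (1/c) y :=
        ((hasDerivAt_id y).div_const c).const_add 1
      exact h.log h1c.ne'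
    have hat1 : HasDerivAt (fun x => Real.arctan (Real.sqrt (η / x - d^2) / K))
        (1 / (1 + (S/K)^2) * (-(η / y^2) / (2 * S) / K)) y := (hsq.div_const K).arctan
    have hat2 : HasDerivAt (fun x => Real.arctan (Real.sqrt (η / x - d^2) / d))
        (1 / (1 + (S/d)^2) * (-(η / y^2) / (2 * S) / d)) y := (hsq.div_const d).arctan
    have hG := (((hlog.mul hsq).const_mul (-(2/D))).sub
      (hat1.const_mul (4/D*K))).add (hat2.const_mul (4*d/D))
    convert hG using 1
    · rfl
    · rfl
    · funext x; simp only [hg_def, Pi.add_apply, Pi.sub_apply, Pi.mul_apply]; ring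
    · simp only [hf_def]
      rw [← hS_def]
      exact stmt_19_alg D d η c y S K _ hD hd hc hy0' hS hK hS2 hK2
  have hint : IntervalIntegrable f volume y₁ b := by
    set C : ℝ := Real.log (1 + b/c) * (η * b / (D * y₁^2 * Real.sqrt η)) with hC_def
    have hbase : IntervalIntegrable (fun x : ℝ => C * (b - x) ^ (-(1/2) : ℝ)) volume y₁ b := by
      have h1 : IntervalIntegrable (fun x : ℝ => x ^ (-(1/2) : ℝ)) volume 0 (b - y₁) :=
        intervalIntegral.intervalIntegrable_rpow' (by norm_num)
      have h2 := h1.comp_sub_left b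
      simp only [sub_zero] at h2
      have h3 : b - (b - y₁) = y₁ := by ring
      rw [h3] at h2
      exact (h2.symm.const_mul C)
    apply hbase.mono_fun
    · apply Measurable.aestronglyMeasurable
      apply Measurable.mul
      · exact Real.measurable_log.comp (measurable_const.add (measurable_id.div_const c))
      · exact measurable_const.div
          ((measurable_const.mul (measurable_id.pow_const 2)).mul
            ((measurable_const.div measurable_id).sub measurable_const).sqrt)
    rw [Set.uIoc_of_le hyb]
    refine (MeasureTheory.ae_restrict_iff' measurableSet_Ioc).2 (Filter.Eventually.of_forall ?_)
    intro y hy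
    rcases eq_or_lt_of_le hy.2 with rfl | hylt
    · simp only [hf_def, hsb, mul_zero, div_zero, mul_zero]
      simp only [norm_zero, norm_mul]
      positivity
    · have hy0' : 0 < y := hy0.trans hy.1
      have hss : 0 < η / y - d^2 := by
        have h := div_lt_div_of_pos_left hη hy0' hylt
        rw [hbη] at h; linarith
      have hS : 0 < Real.sqrt (η / y - d^2) := Real.sqrt_pos.2 hss
      set S := Real.sqrt (η / y - d^2) with hS_def
      have hby : 0 < b - y := by linarith
      -- lower bound on S
      have hSlb : Real.sqrt η * Real.sqrt (b - y) / b ≤ S := by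
        have hsq : (Real.sqrt η * Real.sqrt (b - y) / b)^2 ≤ η / y - d^2 := by
          have e : (Real.sqrt η * Real.sqrt (b - y) / b)^2 = η * (b - y) / b^2 := by
            rw [div_pow, mul_pow, Real.sq_sqrt hη.le, Real.sq_sqrt hby.le]
          rw [e]
          have e2 : η / y - d^2 = η * (b - y) / (y * b) := by
            rw [← hbη]; field_simp
          rw [e2]
          apply div_le_div_of_nonneg_left (by positivity) (by positivity)
          nlinarith
        have h0 : 0 ≤ Real.sqrt η * Real.sqrt (b - y) / b := by positivity
        calc Real.sqrt η * Real.sqrt (b - y) / b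
            = Real.sqrt ((Real.sqrt η * Real.sqrt (b - y) / b)^2) := by
              rw [Real.sqrt_sq h0]
          _ ≤ S := Real.sqrt_le_sqrt hsq
      have hL : Real.log (1 + y/c) ≤ Real.log (1 + b/c) := by
        have hyc : 1 + y/c ≤ 1 + b/c := by gcongr
        exact Real.log_le_log (by positivity) hyc
      have hL0 : 0 ≤ Real.log (1 + y/c) := by
        apply Real.log_nonneg
        have : 0 ≤ y / c := by positivity
        linarith
      have hQ : η / (D * y^2 * S) ≤
          (η * b / (D * y₁^2 * Real.sqrt η)) * (1 / Real.sqrt (b - y)) := by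
        have hden : D * y₁^2 * (Real.sqrt η * Real.sqrt (b - y) / b) ≤ D * y^2 * S := by
          have h1 : y₁^2 ≤ y^2 := by nlinarith [hy.1.le]
          have h2 : 0 ≤ Real.sqrt η * Real.sqrt (b - y) / b := by positivity
          exact mul_le_mul (mul_le_mul_of_nonneg_left h1 hD.le) hSlb h2 (by positivity)
        have hden0 : 0 < D * y₁^2 * (Real.sqrt η * Real.sqrt (b - y) / b) := by positivity
        calc η / (D * y^2 * S) ≤ η / (D * y₁^2 * (Real.sqrt η * Real.sqrt (b - y) / b)) :=
              div_le_div_of_nonneg_left hη.le hden0 hden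
          _ = (η * b / (D * y₁^2 * Real.sqrt η)) * (1 / Real.sqrt (b - y)) := by
              have h1 : Real.sqrt η ≠ 0 := by positivity
              have h2 : Real.sqrt (b - y) ≠ 0 := by positivity
              field_simp
      have hrpow : (b - y) ^ (-(1/2) : ℝ) = 1 / Real.sqrt (b - y) := by
        rw [Real.rpow_neg hby.le, Real.sqrt_eq_rpow]
        norm_num
      have hfy : f y = Real.log (1 + y/c) * (η / (D * y^2 * S)) := by
        simp only [hf_def, hS_def]
      have hQ0 : 0 ≤ η / (D * y^2 * S) := by positivity
      have hbnd : f y ≤ C * (b - y) ^ (-(1/2) : ℝ) := by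
        rw [hfy, hC_def, hrpow]
        calc Real.log (1 + y/c) * (η / (D * y^2 * S))
            ≤ Real.log (1 + b/c) * ((η * b / (D * y₁^2 * Real.sqrt η)) * (1 / Real.sqrt (b - y))) := by
              apply mul_le_mul hL hQ hQ0 (hL0.trans hL)
          _ = Real.log (1 + b/c) * (η * b / (D * y₁^2 * Real.sqrt η)) * (1 / Real.sqrt (b - y)) := by
              ring
      have hf0 : 0 ≤ f y := by
        rw [hfy]; exact mul_nonneg hL0 hQ0
      simp only [Real.norm_eq_abs]
      rw [abs_of_nonneg hf0]
      exact hbnd.trans (le_abs_self _)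
  have key := intervalIntegral.integral_eq_sub_of_hasDerivAt_of_le hyb hcont hderiv hint
  rw [hf_def] at key
  rw [key, hg_def]
  simp only [hsb]
  simp only [zero_div, Real.arctan_zero, mul_zero]
  ring
end
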